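/- arXiv:1807.03229 — 6 statements merged into one kernel-verified Lean document; each statement's English description precedes it below -/
import Mathlib

section
/- Let E be a locally compact Polish space and m ∈ ℕ. For each 0 ≤ k ≤ m let g_k : E^k → ℝ be a bounded continuous symmetric function (with g_0 a real constant). If Σ_{k=0}^{m} ⟨g_k,ν^k⟩ = 0 for every finite nonnegative Borel measure ν on E, then g_k is identically zero for every k (and g_0 = 0). -/
open MeasureTheory Filter Topology

section Aux

variable {E : Type*} [MeasurableSpace E]

lemma pru_isFiniteMeasure {k : ℕ} (y : Fin k → E) (c : Fin k → NNReal) :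
    IsFiniteMeasure (∑ a : Fin k, (c a : ENNReal) • Measure.dirac (y a)) := by
  constructor
  rw [Measure.finset_sum_apply]
  refine ENNReal.sum_lt_top.mpr fun a _ => ?_
  simpa [Measure.smul_apply] using ENNReal.coe_lt_top

lemma pru_pi_sum_smul_dirac {k : ℕ} (n : ℕ) (y : Fin k → E) (c : Fin k → NNReal) :
    Measure.pi (fun _ : Fin n => ∑ a : Fin k, (c a : ENNReal) • Measure.dirac (y a))
      = ∑ f : Fin n → Fin k,
          (∏ i, (c (f i) : ENNReal)) • Measure.dirac (fun i => y (f i)) := by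
  classical
  haveI : ∀ _i : Fin n, IsFiniteMeasure (∑ a : Fin k, (c a : ENNReal) • Measure.dirac (y a)) :=
    fun _ => pru_isFiniteMeasure y c
  refine Measure.pi_eq fun s hs => ?_
  have hms : MeasurableSet (Set.pi Set.univ s) := MeasurableSet.univ_pi hs
  rw [Measure.finset_sum_apply]
  calc ∑ f : Fin n → Fin k,
        ((∏ i, (c (f i) : ENNReal)) • Measure.dirac (fun i => y (f i))) (Set.pi Set.univ s)
      = ∑ f : Fin n → Fin k, ∏ i, ((c (f i) : ENNReal) * if y (f i) ∈ s i then 1 else 0) := by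
        refine Finset.sum_congr rfl fun f _ => ?_
        rw [Measure.smul_apply, Measure.dirac_apply' _ hms, Finset.prod_mul_distrib,
          Finset.prod_boole]
        simp [Set.indicator_apply, Set.mem_univ_pi]
    _ = ∏ i : Fin n, ∑ a : Fin k, ((c a : ENNReal) * if y a ∈ s i then 1 else 0) := by
        rw [Finset.prod_univ_sum]
        simp
    _ = ∏ i : Fin n, (∑ a : Fin k, (c a : ENNReal) • Measure.dirac (y a)) (s i) := by
        refine Finset.prod_congr rfl fun i _ => ?_
        rw [Measure.finset_sum_apply]
        refine Finset.sum_congr rfl fun a _ => ?_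
        rw [Measure.smul_apply, Measure.dirac_apply' _ (hs i)]
        simp [Set.indicator_apply]

lemma pru_integral_expand {k : ℕ} (n : ℕ) (y : Fin k → E) (c : Fin k → NNReal)
    {F : (Fin n → E) → ℝ} (hF : StronglyMeasurable F) :
    ∫ z, F z ∂(Measure.pi (fun _ : Fin n => ∑ a : Fin k, (c a : ENNReal) • Measure.dirac (y a)))
      = ∑ f : Fin n → Fin k, (∏ i, (c (f i) : ℝ)) * F (fun i => y (f i)) := by
  rw [pru_pi_sum_smul_dirac]
  have hdint : ∀ p : Fin n → E, Integrable F (Measure.dirac p) := by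
    intro p
    refine ⟨hF.aestronglyMeasurable, ?_⟩
    rw [HasFiniteIntegral, lintegral_dirac' p hF.measurable.enorm]
    exact ENNReal.coe_lt_top
  rw [integral_finset_sum_measure (fun f _ => (hdint _).smul_measure
    (by simp [ENNReal.prod_ne_top]))]
  refine Finset.sum_congr rfl fun f _ => ?_
  rw [integral_smul_measure, integral_dirac' _ _ hF]
  simp [ENNReal.toReal_prod]

lemma pru_alt_sum {k : ℕ} (T : Finset (Fin k)) :
    ∑ S : Finset (Fin k), (if T ⊆ S then ((-1 : ℝ)) ^ S.card else 0)
      = if T = Finset.univ then (-1 : ℝ) ^ k else 0 := by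
  classical
  rw [← Finset.sum_filter]
  have hbij : ∑ S ∈ Finset.univ.filter (fun S => T ⊆ S), ((-1 : ℝ)) ^ S.card
      = ∑ U ∈ (Tᶜ).powerset, ((-1 : ℝ)) ^ (T ∪ U).card := by
    refine Finset.sum_bij' (fun S _ => S \ T) (fun U _ => T ∪ U) ?_ ?_ ?_ ?_ ?_
    · intro S hS
      simp only [Finset.mem_filter, Finset.mem_univ, true_and] at hS
      simp only [Finset.mem_powerset]
      intro a ha
      simp only [Finset.mem_sdiff] at ha
      simp [Finset.mem_compl, ha.2]
    · intro U hU
      simp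
    · intro S hS
      simp only [Finset.mem_filter, Finset.mem_univ, true_and] at hS
      exact Finset.union_sdiff_of_subset hS
    · intro U hU
      simp only [Finset.mem_powerset] at hU
      ext b
      simp only [Finset.mem_sdiff, Finset.mem_union]
      constructor
      · rintro ⟨h1 | h1, h2⟩
        · exact absurd h1 h2
        · exact h1
      · intro hbU
        exact ⟨Or.inr hbU, fun hbT => (Finset.mem_compl.1 (hU hbU)) hbT⟩
    · intro S hS
      simp only [Finset.mem_filter, Finset.mem_univ, true_and] at hS
      rw [Finset.union_sdiff_of_subset hS]
  rw [hbij]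
  have hz : ∀ U ∈ (Tᶜ).powerset, ((-1 : ℝ)) ^ (T ∪ U).card
      = ((-1 : ℝ)) ^ T.card * ((-1 : ℝ)) ^ U.card := by
    intro U hU
    rw [Finset.card_union_of_disjoint, pow_add]
    exact Finset.disjoint_left.2 fun a haT haU =>
      (Finset.mem_compl.1 (Finset.mem_powerset.1 hU haU)) haT
  rw [Finset.sum_congr rfl hz, ← Finset.mul_sum]
  have hint : (∑ U ∈ (Tᶜ).powerset, ((-1 : ℝ)) ^ U.card)
      = if Tᶜ = ∅ then 1 else 0 := by
    have h := Finset.sum_powerset_neg_one_pow_card (x := Tᶜ)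
    have : ((∑ U ∈ (Tᶜ).powerset, ((-1 : ℤ)) ^ U.card : ℤ) : ℝ)
        = ∑ U ∈ (Tᶜ).powerset, ((-1 : ℝ)) ^ U.card := by push_cast; ring
    rw [← this, h]
    split <;> simp
  rw [hint]
  by_cases hT : T = Finset.univ
  · have : Tᶜ = ∅ := Finset.compl_eq_empty_iff _ |>.2 hT
    simp [hT, this, Finset.card_univ]
  · have : Tᶜ ≠ ∅ := fun hc => hT ((Finset.compl_eq_empty_iff _).1 hc)
    simp [hT, this]

end Aux

/-- Uniqueness of the polynomial representation: if `g_k : E^k → ℝ`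
(`0 ≤ k ≤ m`) are bounded continuous symmetric functions and
`Σ_{k=0}^m ⟨g_k, ν^k⟩ = 0` for every finite nonnegative Borel measure `ν` on the locally
compact Polish space `E`, then every `g_k` vanishes identically. -/
theorem polynomial_representation_unique
    {E : Type*} [TopologicalSpace E] [PolishSpace E] [LocallyCompactSpace E]
    [MeasurableSpace E] [BorelSpace E] (m : ℕ)
    (g : (k : ℕ) → (Fin k → E) → ℝ)
    (hcont : ∀ k ≤ m, Continuous (g k))
    (hbdd : ∀ k ≤ m, ∃ C : ℝ, ∀ x, |g k x| ≤ C)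
    (hsym : ∀ k ≤ m, ∀ (σ : Equiv.Perm (Fin k)) (x : Fin k → E), g k (x ∘ σ) = g k x)
    (hzero : ∀ ν : FiniteMeasure E,
      ∑ k ∈ Finset.range (m + 1),
        ∫ x : Fin k → E, g k x ∂(Measure.pi fun _ : Fin k => (ν : Measure E)) = 0) :
    ∀ k ≤ m, ∀ x : Fin k → E, g k x = 0 := by
  classical
  intro k hk x
  -- Step 1: plug in finitely supported atomic measures.
  have key : ∀ c : Fin k → NNReal,
      ∑ j ∈ Finset.range (m + 1), ∑ f : Fin j → Fin k,
        (∏ i, (c (f i) : ℝ)) * g j (fun i => x (f i)) = 0 := by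
    intro c
    have hfin := pru_isFiniteMeasure x c
    have h := hzero ⟨∑ a : Fin k, (c a : ENNReal) • Measure.dirac (x a), hfin⟩
    refine Eq.trans ?_ h
    exact Finset.sum_congr rfl fun j hj => (pru_integral_expand j x c
      ((hcont j (Nat.lt_succ_iff.mp (Finset.mem_range.mp hj))).stronglyMeasurable)).symm
  -- Step 2: the coefficients of the resulting polynomial identity.
  set a : ℕ → ℝ := fun j => ∑ f : Fin j → Fin k,
    (if Finset.image f Finset.univ = Finset.univ then g j (fun i => x (f i)) else 0) with ha
  have key2 : ∀ t : NNReal,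
      ∑ j ∈ Finset.range (m + 1), (t : ℝ) ^ j * a j = 0 := by
    intro t
    have h0 : ∑ S : Finset (Fin k), (-1 : ℝ) ^ S.card *
        (∑ j ∈ Finset.range (m + 1), ∑ f : Fin j → Fin k,
          (∏ i, ((if f i ∈ S then t else 0 : NNReal) : ℝ)) * g j (fun i => x (f i))) = 0 := by
      refine Finset.sum_eq_zero fun S _ => ?_
      rw [key (fun i => if i ∈ S then t else 0), mul_zero]
    have hprod : ∀ (S : Finset (Fin k)) (j : ℕ) (f : Fin j → Fin k),
        (∏ i, ((if f i ∈ S then t else 0 : NNReal) : ℝ))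
          = if Finset.image f Finset.univ ⊆ S then (t : ℝ) ^ j else 0 := by
      intro S j f
      have : ∀ i : Fin j, ((if f i ∈ S then t else 0 : NNReal) : ℝ)
          = (t : ℝ) * (if f i ∈ S then 1 else 0) := by
        intro i; split <;> simp
      rw [Finset.prod_congr rfl fun i _ => this i, Finset.prod_mul_distrib,
        Finset.prod_const, Finset.prod_boole, Finset.card_univ, Fintype.card_fin]
      by_cases hsub : Finset.image f Finset.univ ⊆ S
      · have h1 : ∀ i ∈ Finset.univ, f i ∈ S := fun i _ =>
          hsub (Finset.mem_image_of_mem f (Finset.mem_univ i))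
        rw [if_pos h1, if_pos hsub, mul_one]
      · have h1 : ¬ ∀ i ∈ Finset.univ, f i ∈ S := fun hc => hsub (Finset.image_subset_iff.2 hc)
        rw [if_neg h1, if_neg hsub, mul_zero]
    calc ∑ j ∈ Finset.range (m + 1), (t : ℝ) ^ j * a j
        = ((-1 : ℝ) ^ k)⁻¹ * ∑ S : Finset (Fin k), (-1 : ℝ) ^ S.card *
          (∑ j ∈ Finset.range (m + 1), ∑ f : Fin j → Fin k,
            (∏ i, ((if f i ∈ S then t else 0 : NNReal) : ℝ)) * g j (fun i => x (f i))) := by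
          rw [show ∑ S : Finset (Fin k), (-1 : ℝ) ^ S.card *
              (∑ j ∈ Finset.range (m + 1), ∑ f : Fin j → Fin k,
                (∏ i, ((if f i ∈ S then t else 0 : NNReal) : ℝ)) * g j (fun i => x (f i)))
              = (-1 : ℝ) ^ k * ∑ j ∈ Finset.range (m + 1), (t : ℝ) ^ j * a j from ?_]
          · rw [← mul_assoc, inv_mul_cancel₀ (pow_ne_zero _ (by norm_num : (-1:ℝ) ≠ 0)) , one_mul]
          calc ∑ S : Finset (Fin k), (-1 : ℝ) ^ S.card *
              (∑ j ∈ Finset.range (m + 1), ∑ f : Fin j → Fin k,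
                (∏ i, ((if f i ∈ S then t else 0 : NNReal) : ℝ)) * g j (fun i => x (f i)))
              = ∑ j ∈ Finset.range (m + 1), ∑ f : Fin j → Fin k,
                  ∑ S : Finset (Fin k),
                    (if Finset.image f Finset.univ ⊆ S then (-1 : ℝ) ^ S.card else 0)
                      * ((t : ℝ) ^ j * g j (fun i => x (f i))) := by
                simp_rw [Finset.mul_sum]
                rw [Finset.sum_comm]
                refine Finset.sum_congr rfl fun j _ => ?_
                rw [Finset.sum_comm]
                refine Finset.sum_congr rfl fun f _ => ?_
                refine Finset.sum_congr rfl fun S _ => ?_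
                rw [hprod]
                split <;> ring
            _ = (-1 : ℝ) ^ k * ∑ j ∈ Finset.range (m + 1), (t : ℝ) ^ j * a j := by
                simp_rw [← Finset.sum_mul, pru_alt_sum]
                rw [Finset.mul_sum]
                refine Finset.sum_congr rfl fun j _ => ?_
                rw [ha, Finset.mul_sum, Finset.mul_sum]
                refine Finset.sum_congr rfl fun f _ => ?_
                split <;> ring
    _ = 0 := by rw [h0, mul_zero]
  -- Step 3: polynomial vanishing on infinitely many points.
  set q : Polynomial ℝ := ∑ j ∈ Finset.range (m + 1), Polynomial.monomial j (a j) with hq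
  have hqeval : ∀ t : NNReal, q.eval (t : ℝ) = 0 := by
    intro t
    rw [hq, Polynomial.eval_finset_sum]
    simp_rw [Polynomial.eval_monomial]
    rw [← key2 t]
    exact Finset.sum_congr rfl fun j _ => by ring
  have hq0 : q = 0 := by
    refine Polynomial.eq_zero_of_infinite_isRoot q ?_
    refine Set.infinite_of_injective_forall_mem (f := fun n : ℕ => (n : ℝ))
      Nat.cast_injective ?_
    intro n
    have := hqeval (n : NNReal)
    simpa [Polynomial.IsRoot] using this
  have hak : a k = 0 := by
    have : q.coeff k = 0 := by rw [hq0]; simp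
    rw [hq, Polynomial.finset_sum_coeff] at this
    simp_rw [Polynomial.coeff_monomial] at this
    rwa [Finset.sum_ite_eq' (Finset.range (m + 1)) k a,
      if_pos (Finset.mem_range.2 (Nat.lt_succ_of_le hk))] at this
  -- Step 4: identify a k with (number of surjections) * g k x.
  have hterm : ∀ f : Fin k → Fin k, Finset.image f Finset.univ = Finset.univ →
      g k (fun i => x (f i)) = g k x := by
    intro f hf
    have hsurj : Function.Surjective f := by
      intro b
      have : b ∈ Finset.image f Finset.univ := by rw [hf]; exact Finset.mem_univ b
      obtain ⟨i, _, hi⟩ := Finset.mem_image.1 this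
      exact ⟨i, hi⟩
    have hbij : Function.Bijective f := ⟨Finite.injective_iff_surjective.2 hsurj, hsurj⟩
    have := hsym k hk (Equiv.ofBijective f hbij) x
    simpa [Function.comp_def, Equiv.ofBijective] using this
  have hak2 : ∑ f : Fin k → Fin k,
      (if Finset.image f Finset.univ = Finset.univ then g k (fun i => x (f i)) else 0) = 0 := hak
  have hsum : ∑ f : Fin k → Fin k,
      (if Finset.image f Finset.univ = Finset.univ then g k (fun i => x (f i)) else 0)
      = ∑ f : Fin k → Fin k,
        (if Finset.image f Finset.univ = Finset.univ then g k x else 0) := by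
    refine Finset.sum_congr rfl fun f _ => ?_
    by_cases hf : Finset.image f Finset.univ = Finset.univ
    · rw [if_pos hf, if_pos hf, hterm f hf]
    · rw [if_neg hf, if_neg hf]
  rw [hsum, ← Finset.sum_filter, Finset.sum_const] at hak2
  have hidmem : (id : Fin k → Fin k) ∈
      Finset.univ.filter (fun f : Fin k → Fin k => Finset.image f Finset.univ = Finset.univ) := by
    simp [Finset.image_id]
  have hcard : (Finset.univ.filter
      (fun f : Fin k → Fin k => Finset.image f Finset.univ = Finset.univ)).card ≠ 0 := by
    exact Finset.card_ne_zero_of_mem hidmem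
  rw [nsmul_eq_mul] at hak2
  rcases mul_eq_zero.1 hak2 with h | h
  · exact absurd (Nat.cast_eq_zero.1 h) hcard
  · exact h
end

section
/- Let E be a locally compact Polish space, K := E^Δ its one-point compactification, m ≥ 1, and for 0 ≤ k ≤ m let g_k : K^k → ℝ be continuous and symmetric. Define p(ν) := Σ_{k=0}^{m} ⟨g_k,ν^k⟩ for ν ∈ M₁(K), and suppose ν_* ∈ M₁(K) satisfies p(ν_*) = sup_{ν ∈ M₁(K)} p(ν). Define d : K → ℝ by d(x) := Σ_{k=1}^{m} k ∫_{K^{k−1}} g_k(y₁,…,y_{k−1},x) dν_*(y₁)⋯dν_*(y_{k−1}). Then (first-order optimality condition) d(x) ≥ d(z) for every x in the topological support of ν_* and every z ∈ K; consequently d is constant on supp(ν_*), and ∫_K d dμ = sup_K d for every μ ∈ M₁(K) with supp(μ) ⊆ supp(ν_*). -/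
open MeasureTheory Filter Topology Set
set_option linter.unusedSectionVars false

section Aux

variable {X : Type*} [TopologicalSpace X] [MeasurableSpace X] [BorelSpace X]
  [SecondCountableTopology X]

/-- bounded measurable functions are integrable on finite measures -/
lemma KKT.integrable_of_bound {Y : Type*} [MeasurableSpace Y] (μ : Measure Y)
    [IsFiniteMeasure μ] (f : Y → ℝ) (hf : AEStronglyMeasurable f μ) (C : ℝ)
    (hC : ∀ x, |f x| ≤ C) : Integrable f μ :=
  (integrable_const C).mono' hf (ae_of_all _ (by simpa [Real.norm_eq_abs] using hC))

lemma KKT.abs_integral_le {Y : Type*} [MeasurableSpace Y] (μ : Measure Y)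
    [IsProbabilityMeasure μ] (f : Y → ℝ) (C : ℝ) (hC : ∀ x, |f x| ≤ C) :
    |∫ x, f x ∂μ| ≤ C := by
  have := norm_integral_le_of_norm_le_const (μ := μ) (f := f) (C := C)
    (ae_of_all _ (by simpa [Real.norm_eq_abs] using hC))
  simpa [Real.norm_eq_abs, measure_univ] using this

lemma KKT.continuous_insertNth {n : ℕ} (j : Fin (n + 1)) :
    Continuous (fun p : X × (Fin n → X) =>
      (Fin.insertNth (α := fun _ => X) j p.1 p.2)) := by
  refine continuous_pi fun i => ?_
  refine Fin.succAboveCases (α := fun i => Continuous fun p : X × (Fin n → X) =>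
    Fin.insertNth (α := fun _ => X) j p.1 p.2 i) j ?_ ?_ i
  · simpa [Fin.insertNth_apply_same] using (continuous_fst : Continuous
      (fun p : X × (Fin n → X) => p.1))
  · intro t
    simpa [Fin.insertNth_apply_succAbove] using
      (by fun_prop : Continuous fun p : X × (Fin n → X) => p.2 t)

/-- Fubini for one slot of a finite product of probability measures. -/
lemma KKT.integral_pi_succAbove {n : ℕ} (μ : Fin (n + 1) → Measure X)
    [∀ i, IsProbabilityMeasure (μ i)] (j : Fin (n + 1))
    (g : (Fin (n + 1) → X) → ℝ) (hg : Continuous g) (C : ℝ) (hC : ∀ x, |g x| ≤ C) :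
    ∫ x, g x ∂(Measure.pi μ) =
      ∫ a, ∫ y, g (j.insertNth a y) ∂(Measure.pi fun i => μ (j.succAbove i)) ∂(μ j) := by
  have hmp := measurePreserving_piFinSuccAbove μ j
  have hGc : Continuous (fun q : X × (Fin n → X) => g (j.insertNth q.1 q.2)) :=
    hg.comp (KKT.continuous_insertNth j)
  have hint : Integrable (fun q : X × (Fin n → X) => g (j.insertNth q.1 q.2))
      ((μ j).prod (Measure.pi fun i => μ (j.succAbove i))) :=
    KKT.integrable_of_bound _ _ hGc.aestronglyMeasurable C (fun q => hC _)
  have hcomp := hmp.integral_comp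
    (MeasurableEquiv.piFinSuccAbove (fun _ : Fin (n+1) => X) j).measurableEmbedding
    (fun q : X × (Fin n → X) => g (j.insertNth q.1 q.2))
  calc ∫ x, g x ∂(Measure.pi μ)
      = ∫ x, (fun q : X × (Fin n → X) => g (j.insertNth q.1 q.2))
          ((MeasurableEquiv.piFinSuccAbove (fun _ : Fin (n+1) => X) j) x) ∂(Measure.pi μ) := by
        refine integral_congr_ae (ae_of_all _ fun x => ?_)
        simp [MeasurableEquiv.piFinSuccAbove_apply, Fin.insertNthEquiv,
          Fin.insertNth_self_removeNth, Fin.removeNth]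
    _ = ∫ q, g (j.insertNth q.1 q.2)
          ∂((μ j).prod (Measure.pi fun i => μ (j.succAbove i))) :=
        hcomp
    _ = ∫ a, ∫ y, g (j.insertNth a y) ∂(Measure.pi fun i => μ (j.succAbove i)) ∂(μ j) :=
        integral_prod _ hint

/-- the parametrized inner integral is strongly measurable -/
lemma KKT.sm_inner {n : ℕ} (π : Measure (Fin n → X)) [SFinite π] (j : Fin (n + 1))
    (g : (Fin (n + 1) → X) → ℝ) (hg : Continuous g) :
    StronglyMeasurable (fun a => ∫ y, g (j.insertNth a y) ∂π) :=
  (hg.comp (KKT.continuous_insertNth j)).stronglyMeasurable.integral_prod_right'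

end Aux

section Aux2
variable {X : Type*} [TopologicalSpace X] [MeasurableSpace X] [BorelSpace X]
  [SecondCountableTopology X]

/-- Linearity of the product integral in one slot. -/
lemma KKT.integral_pi_slot {n : ℕ} (μ₀ μ₁ μ₂ : Fin (n + 1) → Measure X)
    [∀ i, IsProbabilityMeasure (μ₀ i)] [∀ i, IsProbabilityMeasure (μ₁ i)]
    [∀ i, IsProbabilityMeasure (μ₂ i)] (j : Fin (n + 1)) (a b : ℝ)
    (ha : 0 ≤ a) (hb : 0 ≤ b)
    (hj : μ₀ j = ENNReal.ofReal a • μ₁ j + ENNReal.ofReal b • μ₂ j)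
    (hoff : ∀ i, i ≠ j → μ₁ i = μ₀ i ∧ μ₂ i = μ₀ i)
    (g : (Fin (n + 1) → X) → ℝ) (hg : Continuous g) (C : ℝ) (hC : ∀ x, |g x| ≤ C) :
    ∫ x, g x ∂(Measure.pi μ₀) =
      a * ∫ x, g x ∂(Measure.pi μ₁) + b * ∫ x, g x ∂(Measure.pi μ₂) := by
  have h1 : (fun i => μ₁ (j.succAbove i)) = fun i => μ₀ (j.succAbove i) :=
    funext fun i => (hoff _ (Fin.succAbove_ne j i)).1
  have h2 : (fun i => μ₂ (j.succAbove i)) = fun i => μ₀ (j.succAbove i) :=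
    funext fun i => (hoff _ (Fin.succAbove_ne j i)).2
  rw [KKT.integral_pi_succAbove μ₀ j g hg C hC, KKT.integral_pi_succAbove μ₁ j g hg C hC,
    KKT.integral_pi_succAbove μ₂ j g hg C hC, h1, h2, hj]
  set π : Measure (Fin n → X) := Measure.pi fun i => μ₀ (j.succAbove i)
  have : IsProbabilityMeasure π := by infer_instance
  set f : X → ℝ := fun a' => ∫ y, g (j.insertNth a' y) ∂π with hf
  have hfm : StronglyMeasurable f := KKT.sm_inner π j g hg
  have hfb : ∀ x, |f x| ≤ C := fun x =>
    KKT.abs_integral_le π _ C (fun y => hC _)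
  have hint1 : Integrable f (μ₁ j) :=
    KKT.integrable_of_bound _ f hfm.aestronglyMeasurable C hfb
  have hint2 : Integrable f (μ₂ j) :=
    KKT.integrable_of_bound _ f hfm.aestronglyMeasurable C hfb
  rw [integral_add_measure (hint1.smul_measure ENNReal.ofReal_ne_top)
      (hint2.smul_measure ENNReal.ofReal_ne_top),
    integral_smul_measure, integral_smul_measure, ENNReal.toReal_ofReal ha,
    ENNReal.toReal_ofReal hb]
  simp [smul_eq_mul]

/-- moving the distinguished coordinate of a symmetric function to the last slot -/
lemma KKT.insertNth_perm_eq {n : ℕ} (j : Fin (n + 1)) (z : X) (y : Fin n → X) :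
    ((Fin.last n).insertNth (α := fun _ => X) z y) ∘
      ((finSuccEquiv' j).trans (finSuccEquiv' (Fin.last n)).symm) =
      j.insertNth (α := fun _ => X) z y := by
  funext i
  refine Fin.succAboveCases (α := fun i =>
    ((Fin.last n).insertNth (α := fun _ => X) z y)
      (((finSuccEquiv' j).trans (finSuccEquiv' (Fin.last n)).symm) i) =
      j.insertNth (α := fun _ => X) z y i) j ?_ ?_ i
  · simp [finSuccEquiv'_at, finSuccEquiv'_symm_none, Fin.insertNth_apply_same]
  · intro t
    simp [finSuccEquiv'_succAbove, finSuccEquiv'_symm_some,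
      Fin.insertNth_apply_succAbove]

/-- a product integral with a `dirac` in one slot and `ν` elsewhere, for a symmetric
integrand, equals the integral pinning the last slot. -/
lemma KKT.integral_pi_dirac_slot {n : ℕ}
    (g : (Fin (n + 1) → X) → ℝ) (hg : Continuous g)
    (hsym : ∀ (σ : Equiv.Perm (Fin (n + 1))) (x : Fin (n + 1) → X), g (x ∘ σ) = g x)
    (ν : Measure X) [IsProbabilityMeasure ν] (z : X)
    (μ : Fin (n + 1) → Measure X) [∀ i, IsProbabilityMeasure (μ i)]
    (j : Fin (n + 1)) (hμj : μ j = Measure.dirac z)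
    (hrest : ∀ i, i ≠ j → μ i = ν) (C : ℝ) (hC : ∀ x, |g x| ≤ C) :
    ∫ x, g x ∂(Measure.pi μ) =
      ∫ y, g ((Fin.last n).insertNth z y) ∂(Measure.pi fun _ : Fin n => ν) := by
  have hrest' : (fun i => μ (j.succAbove i)) = fun _ : Fin n => ν :=
    funext fun i => hrest _ (Fin.succAbove_ne j i)
  rw [KKT.integral_pi_succAbove μ j g hg C hC, hrest', hμj,
    integral_dirac' _ z (KKT.sm_inner _ j g hg)]
  refine integral_congr_ae (ae_of_all _ fun y => ?_)
  show g (j.insertNth z y) = g ((Fin.last n).insertNth z y)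
  rw [← KKT.insertNth_perm_eq j z y, hsym]
end Aux2

section Aux3
variable {X : Type*} [TopologicalSpace X] [MeasurableSpace X] [BorelSpace X]
  [SecondCountableTopology X]

lemma KKT.isProb_mix (ν δ : Measure X) [IsProbabilityMeasure ν] [IsProbabilityMeasure δ]
    {t : ℝ} (ht0 : 0 ≤ t) (ht1 : t ≤ 1) :
    IsProbabilityMeasure (ENNReal.ofReal (1 - t) • ν + ENNReal.ofReal t • δ) := by
  constructor
  simp only [Measure.coe_add, Pi.add_apply, Measure.smul_apply, smul_eq_mul,
    measure_univ, mul_one]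
  rw [← ENNReal.ofReal_add (by linarith) ht0]
  norm_num

lemma KKT.drift {n : ℕ} (g : (Fin (n + 1) → X) → ℝ) (hg : Continuous g)
    (C : ℝ) (hC0 : 0 ≤ C) (hC : ∀ x, |g x| ≤ C)
    (ν δ : Measure X) [IsProbabilityMeasure ν] [IsProbabilityMeasure δ]
    {t : ℝ} (ht0 : 0 ≤ t) (ht1 : t ≤ 1) :
    ∀ (j : ℕ), j ≤ n + 1 → ∀ (ρ : Fin (n + 1) → Measure X),
      (∀ i, IsProbabilityMeasure (ρ i)) → (∀ i : Fin (n + 1), (i : ℕ) < j → ρ i = ν) →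
      |(∫ x, g x ∂(Measure.pi (fun i : Fin (n + 1) =>
          if (i : ℕ) < j then (ENNReal.ofReal (1 - t) • ν + ENNReal.ofReal t • δ) else ρ i))) -
        ∫ x, g x ∂(Measure.pi ρ)| ≤ 2 * C * j * t := by
  haveI hmix := KKT.isProb_mix ν δ ht0 ht1
  set νt : Measure X := ENNReal.ofReal (1 - t) • ν + ENNReal.ofReal t • δ with hνt
  intro j
  induction j with
  | zero =>
      intro _ ρ hρp hρ
      have : (fun i : Fin (n + 1) => if (i : ℕ) < 0 then νt else ρ i) = ρ :=
        funext fun i => if_neg (Nat.not_lt_zero _)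
      rw [this, sub_self, abs_zero]
      positivity
  | succ j ih =>
      intro hj ρ hρp hρ
      haveI := hρp
      have hjn : j < n + 1 := hj
      set jf : Fin (n + 1) := ⟨j, hjn⟩ with hjf
      set μ₀ : Fin (n + 1) → Measure X :=
        fun i => if (i : ℕ) < j + 1 then νt else ρ i with hμ₀
      set μ₁ : Fin (n + 1) → Measure X :=
        fun i => if (i : ℕ) < j then νt else ρ i with hμ₁
      set μ₂ : Fin (n + 1) → Measure X :=
        fun i => if (i : ℕ) < j then νt else if i = jf then δ else ρ i with hμ₂
      haveI h₀ : ∀ i, IsProbabilityMeasure (μ₀ i) := fun i => by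
        rw [hμ₀]; dsimp only; split_ifs <;> infer_instance
      haveI h₁ : ∀ i, IsProbabilityMeasure (μ₁ i) := fun i => by
        rw [hμ₁]; dsimp only; split_ifs <;> infer_instance
      haveI h₂ : ∀ i, IsProbabilityMeasure (μ₂ i) := fun i => by
        rw [hμ₂]; dsimp only; split_ifs <;> infer_instance
      have hμ₀j : μ₀ jf = νt := if_pos (Nat.lt_succ_self j)
      have hμ₁j : μ₁ jf = ν := by
        rw [hμ₁]; dsimp only
        rw [if_neg (lt_irrefl j)]
        exact hρ jf (Nat.lt_succ_self j)
      have hμ₂j : μ₂ jf = δ := by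
        rw [hμ₂]; dsimp only
        rw [if_neg (lt_irrefl j), if_pos rfl]
      have hoff : ∀ i, i ≠ jf → μ₁ i = μ₀ i ∧ μ₂ i = μ₀ i := by
        intro i hne
        have hvne : (i : ℕ) ≠ j := fun h => hne (Fin.ext h)
        by_cases h : (i : ℕ) < j
        · constructor
          · rw [hμ₁, hμ₀]; dsimp only
            rw [if_pos h, if_pos (h.trans (Nat.lt_succ_self j))]
          · rw [hμ₂, hμ₀]; dsimp only
            rw [if_pos h, if_pos (h.trans (Nat.lt_succ_self j))]
        · have h' : ¬ (i : ℕ) < j + 1 := by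
            intro hlt
            rcases Nat.lt_succ_iff_lt_or_eq.1 hlt with h2 | h2
            · exact h h2
            · exact hvne h2
          constructor
          · rw [hμ₁, hμ₀]; dsimp only; rw [if_neg h, if_neg h']
          · rw [hμ₂, hμ₀]; dsimp only; rw [if_neg h, if_neg h', if_neg hne]
      have hslot : μ₀ jf = ENNReal.ofReal (1 - t) • μ₁ jf + ENNReal.ofReal t • μ₂ jf := by
        rw [hμ₀j, hμ₁j, hμ₂j]
      have hlin := KKT.integral_pi_slot μ₀ μ₁ μ₂ jf (1 - t) t (by linarith) ht0
        hslot hoff g hg C hC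
      have hih := ih (le_trans (Nat.le_succ j) hj) ρ hρp
        (fun i hi => hρ i (hi.trans (Nat.lt_succ_self j)))
      have hb₂ : |∫ x, g x ∂(Measure.pi μ₂)| ≤ C := KKT.abs_integral_le _ _ C hC
      have hbρ : |∫ x, g x ∂(Measure.pi ρ)| ≤ C := KKT.abs_integral_le _ _ C hC
      have hkey : (∫ x, g x ∂(Measure.pi μ₀)) - ∫ x, g x ∂(Measure.pi ρ) =
          (1 - t) * ((∫ x, g x ∂(Measure.pi μ₁)) - ∫ x, g x ∂(Measure.pi ρ)) +
          t * ((∫ x, g x ∂(Measure.pi μ₂)) - ∫ x, g x ∂(Measure.pi ρ)) := by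
        rw [hlin]; ring
      rw [hkey]
      have habs : |(1 - t) * ((∫ x, g x ∂(Measure.pi μ₁)) - ∫ x, g x ∂(Measure.pi ρ)) +
          t * ((∫ x, g x ∂(Measure.pi μ₂)) - ∫ x, g x ∂(Measure.pi ρ))| ≤
          (1 - t) * |(∫ x, g x ∂(Measure.pi μ₁)) - ∫ x, g x ∂(Measure.pi ρ)| +
          t * |(∫ x, g x ∂(Measure.pi μ₂)) - ∫ x, g x ∂(Measure.pi ρ)| := by
        calc _ ≤ |(1 - t) * ((∫ x, g x ∂(Measure.pi μ₁)) - ∫ x, g x ∂(Measure.pi ρ))| +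
            |t * ((∫ x, g x ∂(Measure.pi μ₂)) - ∫ x, g x ∂(Measure.pi ρ))| := abs_add_le _ _
          _ = _ := by
            rw [abs_mul, abs_mul, abs_of_nonneg (by linarith : (0:ℝ) ≤ 1 - t),
              abs_of_nonneg ht0]
      refine le_trans habs ?_
      have h2C : |(∫ x, g x ∂(Measure.pi μ₂)) - ∫ x, g x ∂(Measure.pi ρ)| ≤ 2 * C :=
        le_trans (abs_sub _ _) (by linarith)
      have hj0 : (0:ℝ) ≤ (j:ℝ) := Nat.cast_nonneg j
      push_cast
      nlinarith [mul_nonneg (mul_nonneg (mul_nonneg (by norm_num : (0:ℝ) ≤ 2) hC0) hj0) ht0,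
        abs_nonneg ((∫ x, g x ∂(Measure.pi μ₁)) - ∫ x, g x ∂(Measure.pi ρ))]
end Aux3

section Aux4
variable {X : Type*} [TopologicalSpace X] [MeasurableSpace X] [BorelSpace X]
  [SecondCountableTopology X]

lemma KKT.key {n : ℕ} (g : (Fin (n + 1) → X) → ℝ) (hg : Continuous g)
    (hsym : ∀ (σ : Equiv.Perm (Fin (n + 1))) (x : Fin (n + 1) → X), g (x ∘ σ) = g x)
    (C : ℝ) (hC0 : 0 ≤ C) (hC : ∀ x, |g x| ≤ C)
    (ν : Measure X) [IsProbabilityMeasure ν] (z : X)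
    {t : ℝ} (ht0 : 0 ≤ t) (ht1 : t ≤ 1) :
    |(∫ x, g x ∂(Measure.pi (fun _ : Fin (n + 1) =>
        (ENNReal.ofReal (1 - t) • ν + ENNReal.ofReal t • Measure.dirac z)))) -
      (∫ x, g x ∂(Measure.pi (fun _ : Fin (n + 1) => ν))) -
      t * (((n : ℝ) + 1) *
        ((∫ y, g ((Fin.last n).insertNth z y) ∂(Measure.pi (fun _ : Fin n => ν))) -
          ∫ x, g x ∂(Measure.pi (fun _ : Fin (n + 1) => ν))))| ≤
      t * t * (4 * C * ((n : ℝ) + 1) * ((n : ℝ) + 1)) := by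
  set δ : Measure X := Measure.dirac z with hδdef
  haveI : IsProbabilityMeasure δ := by rw [hδdef]; infer_instance
  haveI hmix := KKT.isProb_mix ν δ ht0 ht1
  set νt : Measure X := ENNReal.ofReal (1 - t) • ν + ENNReal.ofReal t • δ with hνt
  set A : ℕ → ℝ := fun j =>
    ∫ x, g x ∂(Measure.pi (fun i : Fin (n + 1) => if (i : ℕ) < j then νt else ν)) with hA
  set D : ℕ → ℝ := fun j =>
    ∫ x, g x ∂(Measure.pi (fun i : Fin (n + 1) =>
      if (i : ℕ) < j then νt else if (i : ℕ) = j then δ else ν)) with hD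
  set Tν : ℝ := ∫ x, g x ∂(Measure.pi (fun _ : Fin (n + 1) => ν)) with hTν
  set Ez : ℝ := ∫ y, g ((Fin.last n).insertNth z y) ∂(Measure.pi (fun _ : Fin n => ν))
    with hEz
  -- instances
  have hprobA : ∀ j, ∀ i : Fin (n + 1),
      IsProbabilityMeasure ((fun i : Fin (n + 1) => if (i : ℕ) < j then νt else ν) i) :=
    fun j i => by dsimp only; split_ifs <;> infer_instance
  have hprobD : ∀ j, ∀ i : Fin (n + 1),
      IsProbabilityMeasure ((fun i : Fin (n + 1) =>
        if (i : ℕ) < j then νt else if (i : ℕ) = j then δ else ν) i) :=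
    fun j i => by dsimp only; split_ifs <;> infer_instance
  -- the one-step recursion
  have hstep : ∀ j, j < n + 1 → A (j + 1) = (1 - t) * A j + t * D j := by
    intro j hjn
    set jf : Fin (n + 1) := ⟨j, hjn⟩ with hjf
    haveI := hprobA (j + 1)
    haveI := hprobA j
    haveI := hprobD j
    refine KKT.integral_pi_slot _ _ _ jf (1 - t) t (by linarith) ht0 ?_ ?_ g hg C hC
    · rw [if_pos (Nat.lt_succ_self j), if_neg (lt_irrefl j), if_neg (lt_irrefl j),
        if_pos rfl]
    · intro i hne
      have hvne : (i : ℕ) ≠ j := fun h => hne (Fin.ext h)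
      by_cases h : (i : ℕ) < j
      · constructor <;> · rw [if_pos h, if_pos (h.trans (Nat.lt_succ_self j))]
      · have h' : ¬ (i : ℕ) < j + 1 := by
          intro hlt
          rcases Nat.lt_succ_iff_lt_or_eq.1 hlt with h2 | h2
          · exact h h2
          · exact hvne h2
        constructor
        · rw [if_neg h, if_neg h']
        · rw [if_neg h, if_neg h', if_neg hvne]
  -- telescoping
  have hA0 : A 0 = Tν := by
    rw [hA, hTν]
    exact congrArg (fun μ => ∫ x, g x ∂μ)
      (congrArg Measure.pi (funext fun i : Fin (n + 1) => if_neg (Nat.not_lt_zero _)))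
  have hAtop : A (n + 1) = ∫ x, g x ∂(Measure.pi (fun _ : Fin (n + 1) => νt)) := by
    rw [hA]
    exact congrArg (fun μ => ∫ x, g x ∂μ)
      (congrArg Measure.pi (funext fun i : Fin (n + 1) => if_pos i.isLt))
  have htel : A (n + 1) - A 0 = t * ∑ j ∈ Finset.range (n + 1), (D j - A j) := by
    rw [← Finset.sum_range_sub A (n + 1), Finset.mul_sum]
    refine Finset.sum_congr rfl fun j hj => ?_
    rw [hstep j (Finset.mem_range.1 hj)]; ring
  -- per-term estimates
  have hterm : ∀ j, j < n + 1 → |(D j - A j) - (Ez - Tν)| ≤ 4 * C * (n : ℝ) * t := by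
    intro j hjn
    have hjr : (j : ℝ) ≤ (n : ℝ) := Nat.cast_le.2 (Nat.lt_succ_iff.1 hjn)
    have hAj : |A j - Tν| ≤ 2 * C * j * t := by
      rw [hA, hTν]; dsimp only
      exact KKT.drift g hg C hC0 hC ν δ ht0 ht1 j (le_of_lt hjn) (fun _ => ν)
        (fun i => inferInstance) (fun i _ => rfl)
    have hDj : |D j - (∫ x, g x ∂(Measure.pi (fun i : Fin (n + 1) =>
        if (i : ℕ) = j then δ else ν)))| ≤ 2 * C * j * t := by
      rw [hD]; dsimp only
      have hprobρ : ∀ i : Fin (n + 1), IsProbabilityMeasure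
          ((fun i : Fin (n + 1) => if (i : ℕ) = j then δ else ν) i) :=
        fun i => by dsimp only; split_ifs <;> infer_instance
      exact KKT.drift g hg C hC0 hC ν δ ht0 ht1 j (le_of_lt hjn)
        (fun i => if (i : ℕ) = j then δ else ν) hprobρ
        (fun i hi => if_neg (Nat.ne_of_lt hi))
    have hDbase : (∫ x, g x ∂(Measure.pi (fun i : Fin (n + 1) =>
        if (i : ℕ) = j then δ else ν))) = Ez := by
      have hprobρ : ∀ i : Fin (n + 1), IsProbabilityMeasure
          ((fun i : Fin (n + 1) => if (i : ℕ) = j then δ else ν) i) :=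
        fun i => by dsimp only; split_ifs <;> infer_instance
      haveI := hprobρ
      rw [hEz]
      refine KKT.integral_pi_dirac_slot g hg hsym ν z _ ⟨j, hjn⟩ ?_ ?_ C hC
      · show (if ((⟨j, hjn⟩ : Fin (n + 1)) : ℕ) = j then δ else ν) = Measure.dirac z
        rw [if_pos rfl, hδdef]
      · intro i hne
        have hvne : (i : ℕ) ≠ j := fun h => hne (Fin.ext h)
        show (if (i : ℕ) = j then δ else ν) = ν
        rw [if_neg hvne]
    rw [hDbase] at hDj
    have hj0 : (0:ℝ) ≤ (j:ℝ) := Nat.cast_nonneg j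
    calc |(D j - A j) - (Ez - Tν)| = |(D j - Ez) + (Tν - A j)| := by ring_nf
      _ ≤ |D j - Ez| + |Tν - A j| := abs_add_le _ _
      _ = |D j - Ez| + |A j - Tν| := by rw [abs_sub_comm Tν (A j)]
      _ ≤ 2 * C * j * t + 2 * C * j * t := add_le_add hDj hAj
      _ ≤ 4 * C * (n : ℝ) * t := by
          nlinarith [mul_nonneg (mul_nonneg hC0 (sub_nonneg.2 hjr)) ht0]
  -- sum the estimates
  have hsum : |(∑ j ∈ Finset.range (n + 1), (D j - A j)) - ((n : ℝ) + 1) * (Ez - Tν)| ≤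
      ((n : ℝ) + 1) * (4 * C * (n : ℝ) * t) := by
    have : ((n : ℝ) + 1) * (Ez - Tν) = ∑ _j ∈ Finset.range (n + 1), (Ez - Tν) := by
      rw [Finset.sum_const, Finset.card_range]
      push_cast; ring
    rw [this, ← Finset.sum_sub_distrib]
    calc |∑ j ∈ Finset.range (n + 1), ((D j - A j) - (Ez - Tν))| ≤
        ∑ j ∈ Finset.range (n + 1), |(D j - A j) - (Ez - Tν)| :=
          Finset.abs_sum_le_sum_abs _ _
      _ ≤ ∑ _j ∈ Finset.range (n + 1), (4 * C * (n : ℝ) * t) :=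
          Finset.sum_le_sum fun j hj => hterm j (Finset.mem_range.1 hj)
      _ = ((n : ℝ) + 1) * (4 * C * (n : ℝ) * t) := by
          rw [Finset.sum_const, Finset.card_range]; push_cast; ring
  -- put it together
  have hmain : (∫ x, g x ∂(Measure.pi (fun _ : Fin (n + 1) => νt))) - Tν =
      t * ∑ j ∈ Finset.range (n + 1), (D j - A j) := by
    rw [← hAtop, ← hA0] at *
    exact htel
  rw [hmain]
  have : t * (∑ j ∈ Finset.range (n + 1), (D j - A j)) -
      t * (((n : ℝ) + 1) * (Ez - Tν)) =
      t * ((∑ j ∈ Finset.range (n + 1), (D j - A j)) - ((n : ℝ) + 1) * (Ez - Tν)) := by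
    ring
  rw [this, abs_mul, abs_of_nonneg ht0]
  have hn0 : (0:ℝ) ≤ (n:ℝ) := Nat.cast_nonneg n
  calc t * |(∑ j ∈ Finset.range (n + 1), (D j - A j)) - ((n : ℝ) + 1) * (Ez - Tν)| ≤
      t * (((n : ℝ) + 1) * (4 * C * (n : ℝ) * t)) :=
        mul_le_mul_of_nonneg_left hsum ht0
    _ ≤ t * t * (4 * C * ((n : ℝ) + 1) * ((n : ℝ) + 1)) := by
        nlinarith [mul_nonneg (mul_nonneg (mul_nonneg hC0 ht0) ht0)
          (by linarith : (0:ℝ) ≤ (n:ℝ) + 1)]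
end Aux4

section Aux5
variable {X : Type*} [TopologicalSpace X] [MeasurableSpace X] [BorelSpace X]
  [SecondCountableTopology X]

lemma KKT.ditefun_eq {n : ℕ} (y : Fin n → X) (z : X) :
    (fun i : Fin (n + 1) => if h : (i : ℕ) < n then y ⟨(i : ℕ), h⟩ else z) =
      (Fin.last n).insertNth (α := fun _ => X) z y := by
  funext i
  refine Fin.lastCases ?_ ?_ i
  · rw [dif_neg]
    · exact (Fin.insertNth_apply_same (α := fun _ => X) (Fin.last n) z y).symm
    · simp
  · intro q
    have hq : ((q.castSucc : Fin (n + 1)) : ℕ) < n := by simpa using q.isLt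
    rw [dif_pos hq]
    have h3 : (Fin.last n).insertNth (α := fun _ => X) z y q.castSucc = y q := by
      have h4 := Fin.insertNth_apply_succAbove (α := fun _ => X) (Fin.last n) z y q
      rwa [Fin.succAbove_last] at h4
    rw [h3]
    exact congrArg y (Fin.ext (by simp))

lemma KKT.cont_param {k l : ℕ} (g : (Fin k → X) → ℝ) (hg : Continuous g)
    (C : ℝ) (hC : ∀ x, |g x| ≤ C) (π : Measure (Fin l → X)) [IsProbabilityMeasure π]
    (Φ : X → (Fin l → X) → (Fin k → X))
    (hΦ : Continuous fun p : X × (Fin l → X) => Φ p.1 p.2) :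
    Continuous fun z => ∫ y, g (Φ z y) ∂π := by
  refine continuous_of_dominated (bound := fun _ => C) ?_ ?_ ?_ ?_
  · intro z
    exact ((hg.comp (hΦ.comp (Continuous.prodMk_right z))).aestronglyMeasurable)
  · intro z
    exact ae_of_all _ fun y => by simpa [Real.norm_eq_abs] using hC (Φ z y)
  · exact integrable_const C
  · exact ae_of_all _ fun y =>
      hg.comp (hΦ.comp (continuous_id.prodMk continuous_const))

lemma KKT.cont_dite (k : ℕ) :
    Continuous (fun p : X × (Fin (k - 1) → X) =>
      (fun i : Fin k => if h : (i : ℕ) < k - 1 then p.2 ⟨(i : ℕ), h⟩ else p.1)) := by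
  refine continuous_pi fun i => ?_
  by_cases h : (i : ℕ) < k - 1
  · simp only [dif_pos h]
    exact (continuous_apply _).comp continuous_snd
  · simp only [dif_neg h]
    exact continuous_fst

noncomputable def KKT.Ek {X : Type*} [TopologicalSpace X] [MeasurableSpace X]
    (g : (k : ℕ) → (Fin k → X) → ℝ) (ν : Measure X) (n : ℕ) (z : X) : ℝ :=
  ∫ y : Fin n → X, g (n + 1) ((Fin.last n).insertNth z y)
    ∂(Measure.pi fun _ : Fin n => ν)

end Aux5

lemma OnePoint.secondCountable {E : Type*} [TopologicalSpace E] [T2Space E]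
    [SecondCountableTopology E] [LocallyCompactSpace E] :
    SecondCountableTopology (OnePoint E) := by
  classical
  have : SigmaCompactSpace E := inferInstance
  let K := CompactExhaustion.choice E
  let B := TopologicalSpace.countableBasis E
  let S : Set (Set (OnePoint E)) :=
    ((fun U => (OnePoint.some : E → OnePoint E) '' U) '' B) ∪
      (Set.range (fun n => ((OnePoint.some : E → OnePoint E) '' (K n))ᶜ))
  have hb : TopologicalSpace.IsTopologicalBasis S := by
    apply TopologicalSpace.isTopologicalBasis_of_isOpen_of_nhds
    · rintro u (⟨U, hU, rfl⟩ | ⟨n, rfl⟩)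
      · exact OnePoint.isOpen_image_coe.2 ((TopologicalSpace.isBasis_countableBasis E).isOpen hU)
      · exact OnePoint.isOpen_compl_image_coe.2 ⟨(K.isCompact n).isClosed, K.isCompact n⟩
    · intro a u hau hu
      cases a with
      | infty =>
          have h1 : IsCompact ((OnePoint.some ⁻¹' u : Set E)ᶜ) :=
            ((OnePoint.isOpen_iff_of_mem' hau).1 hu).1
          obtain ⟨n, hn⟩ := K.exists_superset_of_isCompact h1
          refine ⟨((OnePoint.some : E → OnePoint E) '' (K n))ᶜ, Or.inr ⟨n, rfl⟩, ?_, ?_⟩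
          · exact fun h => OnePoint.infty_notMem_image_coe h
          · intro x hx
            cases x with
            | infty => exact hau
            | coe y =>
                have hy : y ∉ K n := fun h => hx (Set.mem_image_of_mem _ h)
                have : y ∈ OnePoint.some ⁻¹' u := by
                  by_contra h
                  exact hy (hn h)
                exact this
      | coe y =>
          have h2 : IsOpen (OnePoint.some ⁻¹' u : Set E) := hu.2
          obtain ⟨V, hV, hyV, hVu⟩ := TopologicalSpace.IsTopologicalBasis.exists_subset_of_mem_open
            (TopologicalSpace.isBasis_countableBasis E) (show y ∈ OnePoint.some ⁻¹' u from hau) h2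
          exact ⟨_, Or.inl ⟨V, hV, rfl⟩, Set.mem_image_of_mem _ hyV,
            by rintro x ⟨w, hw, rfl⟩; exact hVu hw⟩
  exact hb.secondCountableTopology
    (((TopologicalSpace.countable_countableBasis E).image _).union (Set.countable_range _))

/-- The topological support of a measure: the points all of whose open neighborhoods have
positive measure. -/
def measureSupport {X : Type*} [TopologicalSpace X] [MeasurableSpace X]
    (μ : Measure X) : Set X :=
  {x | ∀ U : Set X, IsOpen U → x ∈ U → 0 < μ U}

lemma measure_compl_measureSupport {X : Type*} [TopologicalSpace X] [MeasurableSpace X]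
    [SecondCountableTopology X] (μ : Measure X) : μ (measureSupport μ)ᶜ = 0 := by
  classical
  set B := TopologicalSpace.countableBasis X
  have hsub : (measureSupport μ)ᶜ ⊆ ⋃ b ∈ {b ∈ B | μ b = 0}, b := by
    intro x hx
    simp only [measureSupport, mem_compl_iff, mem_setOf_eq, not_forall] at hx
    obtain ⟨U, hU, hxU, hμU⟩ := hx
    push_neg at hμU
    have hμU : μ U = 0 := le_antisymm (by simpa using hμU) zero_le
    obtain ⟨V, hV, hxV, hVU⟩ := TopologicalSpace.IsTopologicalBasis.exists_subset_of_mem_open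
      (TopologicalSpace.isBasis_countableBasis X) hxU hU
    exact Set.mem_biUnion ⟨hV, le_antisymm (le_trans (measure_mono hVU) hμU.le) zero_le⟩ hxV
  refine measure_mono_null hsub ?_
  refine (measure_biUnion_null_iff ?_).2 fun b hb => hb.2
  exact (TopologicalSpace.countable_countableBasis X).mono (fun b hb => hb.1)

lemma measureSupport_nonempty {X : Type*} [TopologicalSpace X] [MeasurableSpace X]
    [SecondCountableTopology X] (μ : Measure X) [IsProbabilityMeasure μ] :
    (measureSupport μ).Nonempty := by
  by_contra h
  rw [Set.not_nonempty_iff_eq_empty] at h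
  have h2 := measure_compl_measureSupport μ
  rw [h, Set.compl_empty, measure_univ] at h2
  exact one_ne_zero h2

set_option maxHeartbeats 2000000 in
/-- **first-order optimality condition.** Let `K = OnePoint E` be the one-point
compactification of a locally compact Polish space `E`, let `p(ν) = Σ_{k=0}^m ⟨g_k,ν^k⟩` with
continuous symmetric coefficients, and let `ν_*` maximize `p` over `M₁(K)`. Then the
derivative `d(x) = Σ_k k ⟨g_k(·,x), ν_*^{k-1}⟩` satisfies `d(x) ≥ d(z)` for all
`x ∈ supp(ν_*)` and `z ∈ K`; consequently `d` is constant on `supp(ν_*)` and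
`∫ d dμ = sup_K d` whenever `supp(μ) ⊆ supp(ν_*)`. -/
theorem first_order_KKT
    {E : Type*} [TopologicalSpace E] [PolishSpace E] [LocallyCompactSpace E]
    [MeasurableSpace (OnePoint E)] [BorelSpace (OnePoint E)]
    (m : ℕ) (hm : 1 ≤ m)
    (g : (k : ℕ) → (Fin k → OnePoint E) → ℝ)
    (hcont : ∀ k ≤ m, Continuous (g k))
    (hsym : ∀ k ≤ m, ∀ (σ : Equiv.Perm (Fin k)) (x : Fin k → OnePoint E),
      g k (x ∘ σ) = g k x)
    (p : ProbabilityMeasure (OnePoint E) → ℝ)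
    (hp : ∀ ν : ProbabilityMeasure (OnePoint E),
      p ν = ∑ k ∈ Finset.range (m + 1),
        ∫ x : Fin k → OnePoint E, g k x
          ∂(Measure.pi fun _ : Fin k => (ν : Measure (OnePoint E))))
    (ν_star : ProbabilityMeasure (OnePoint E))
    (hmax : ∀ ν : ProbabilityMeasure (OnePoint E), p ν ≤ p ν_star)
    (d : OnePoint E → ℝ)
    (hd : ∀ x : OnePoint E,
      d x = ∑ k ∈ Finset.range (m + 1), (k : ℝ) *
        ∫ y : Fin (k - 1) → OnePoint E,
          g k (fun i => if h : (i : ℕ) < k - 1 then y ⟨(i : ℕ), h⟩ else x)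
          ∂(Measure.pi fun _ : Fin (k - 1) => (ν_star : Measure (OnePoint E)))) :
    (∀ x ∈ measureSupport (ν_star : Measure (OnePoint E)), ∀ z : OnePoint E, d z ≤ d x) ∧
    (∀ x ∈ measureSupport (ν_star : Measure (OnePoint E)),
      ∀ y ∈ measureSupport (ν_star : Measure (OnePoint E)), d x = d y) ∧
    (∀ μ : ProbabilityMeasure (OnePoint E),
      measureSupport (μ : Measure (OnePoint E)) ⊆
        measureSupport (ν_star : Measure (OnePoint E)) →
      ∫ z, d z ∂(μ : Measure (OnePoint E)) = ⨆ z : OnePoint E, d z) := by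
  classical
  haveI : SecondCountableTopology (OnePoint E) := OnePoint.secondCountable
  set ν : Measure (OnePoint E) := (ν_star : Measure (OnePoint E)) with hνdef
  haveI hνP : IsProbabilityMeasure ν := ν_star.prop
  -- uniform bounds on the coefficients
  have hCex : ∀ k : ℕ, ∃ C : ℝ, 0 ≤ C ∧ (k ≤ m → ∀ x, |g k x| ≤ C) := by
    intro k
    by_cases hk : k ≤ m
    · obtain ⟨x₀, -, hx₀⟩ := isCompact_univ.exists_isMaxOn Set.univ_nonempty
        ((hcont k hk).abs.continuousOn)
      exact ⟨|g k x₀|, abs_nonneg _, fun _ x => hx₀ (Set.mem_univ x)⟩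
    · exact ⟨0, le_refl 0, fun h => absurd h hk⟩
  choose C hC0 hCb using hCex
  -- the derivative in terms of `Ek`
  have hdz : ∀ z, d z = ∑ n ∈ Finset.range m, ((n : ℝ) + 1) * KKT.Ek g ν n z := by
    intro z
    rw [hd z, Finset.sum_range_succ']
    simp only [Nat.cast_zero, zero_mul, add_zero]
    refine Finset.sum_congr rfl fun n hn => ?_
    have h1 : (fun (y : Fin n → OnePoint E) => g (n + 1)
        (fun i : Fin (n + 1) => if h : (i : ℕ) < n + 1 - 1 then y ⟨(i : ℕ), h⟩ else z)) =
        fun y => g (n + 1) ((Fin.last n).insertNth z y) :=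
      funext fun y => congrArg _ (KKT.ditefun_eq y z)
    rw [show ((n + 1 : ℕ) : ℝ) = (n : ℝ) + 1 by push_cast; ring]
    exact congrArg (((n : ℝ) + 1) * ·)
      (integral_congr_ae (ae_of_all _ fun y => congrFun h1 y))
  -- continuity and boundedness of Ek
  have hEkcont : ∀ n, n < m → Continuous (KKT.Ek g ν n) := by
    intro n hn
    have hn1 : n + 1 ≤ m := hn
    exact KKT.cont_param (g (n + 1)) (hcont _ hn1) (C (n + 1)) (hCb _ hn1) _
      (fun z y => (Fin.last n).insertNth z y) (KKT.continuous_insertNth (Fin.last n))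
  have hEkb : ∀ n, n < m → ∀ z, |KKT.Ek g ν n z| ≤ C (n + 1) := by
    intro n hn z
    exact KKT.abs_integral_le _ _ _ (fun y => hCb (n + 1) hn _)
  have hdcont : Continuous d := by
    rw [funext hdz]
    exact continuous_finset_sum _ fun n hn =>
      continuous_const.mul (hEkcont n (Finset.mem_range.1 hn))
  -- the constant
  set c : ℝ := ∑ n ∈ Finset.range m, ((n : ℝ) + 1) *
    ∫ x : Fin (n + 1) → OnePoint E, g (n + 1) x
      ∂(Measure.pi fun _ : Fin (n + 1) => ν) with hc
  -- first-order inequality : d ≤ c everywhere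
  have hdlec : ∀ z, d z ≤ c := by
    intro z
    set M : ℝ := ∑ n ∈ Finset.range m,
      (4 * C (n + 1) * ((n : ℝ) + 1) * ((n : ℝ) + 1)) with hM
    have hkey : ∀ t : ℝ, 0 < t → t ≤ 1 → d z - c ≤ t * M := by
      intro t ht0 ht1
      haveI hmixI := KKT.isProb_mix ν (Measure.dirac z) ht0.le ht1
      set νt : Measure (OnePoint E) :=
        ENNReal.ofReal (1 - t) • ν + ENNReal.ofReal t • Measure.dirac z with hνt
      set νtP : ProbabilityMeasure (OnePoint E) := ⟨νt, hmixI⟩ with hνtP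
      have hcmp := hmax νtP
      rw [hp νtP, hp ν_star] at hcmp
      have hcoe : (νtP : Measure (OnePoint E)) = νt := rfl
      rw [hcoe, ← hνdef] at hcmp
      rw [Finset.sum_range_succ', Finset.sum_range_succ'] at hcmp
      have h00 : (∫ x : Fin 0 → OnePoint E, g 0 x ∂(Measure.pi fun _ : Fin 0 => νt)) =
          ∫ x : Fin 0 → OnePoint E, g 0 x ∂(Measure.pi fun _ : Fin 0 => ν) := by
        rw [integral_unique, integral_unique]
        simp [measure_univ]
      rw [h00] at hcmp
      have hSig : ∑ n ∈ Finset.range m,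
          (∫ x : Fin (n + 1) → OnePoint E, g (n + 1) x
            ∂(Measure.pi fun _ : Fin (n + 1) => νt)) ≤
          ∑ n ∈ Finset.range m,
          (∫ x : Fin (n + 1) → OnePoint E, g (n + 1) x
            ∂(Measure.pi fun _ : Fin (n + 1) => ν)) := by linarith
      -- per-term lower bound
      have hterm : ∀ n ∈ Finset.range m,
          t * (((n : ℝ) + 1) * (KKT.Ek g ν n z -
            ∫ x : Fin (n + 1) → OnePoint E, g (n + 1) x
              ∂(Measure.pi fun _ : Fin (n + 1) => ν))) -
          t * t * (4 * C (n + 1) * ((n : ℝ) + 1) * ((n : ℝ) + 1)) ≤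
          (∫ x : Fin (n + 1) → OnePoint E, g (n + 1) x
            ∂(Measure.pi fun _ : Fin (n + 1) => νt)) -
          ∫ x : Fin (n + 1) → OnePoint E, g (n + 1) x
            ∂(Measure.pi fun _ : Fin (n + 1) => ν) := by
        intro n hn
        have hn1 : n + 1 ≤ m := Finset.mem_range.1 hn
        have hk := KKT.key (g (n + 1)) (hcont _ hn1) (hsym _ hn1) (C (n + 1))
          (hC0 _) (hCb _ hn1) ν z ht0.le ht1
        have := abs_le.1 hk
        unfold KKT.Ek
        rw [hνt]
        linarith [this.1]
      have hsum2 : t * ((∑ n ∈ Finset.range m, ((n : ℝ) + 1) * KKT.Ek g ν n z) - c) -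
          t * t * M ≤ 0 := by
        have h1 : ∑ n ∈ Finset.range m,
            (t * (((n : ℝ) + 1) * (KKT.Ek g ν n z -
              ∫ x : Fin (n + 1) → OnePoint E, g (n + 1) x
                ∂(Measure.pi fun _ : Fin (n + 1) => ν))) -
             t * t * (4 * C (n + 1) * ((n : ℝ) + 1) * ((n : ℝ) + 1))) ≤
            ∑ n ∈ Finset.range m,
            ((∫ x : Fin (n + 1) → OnePoint E, g (n + 1) x
              ∂(Measure.pi fun _ : Fin (n + 1) => νt)) -
             ∫ x : Fin (n + 1) → OnePoint E, g (n + 1) x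
              ∂(Measure.pi fun _ : Fin (n + 1) => ν)) :=
          Finset.sum_le_sum hterm
        have h2 : t * ((∑ n ∈ Finset.range m, ((n : ℝ) + 1) * KKT.Ek g ν n z) - c) -
            t * t * M =
            ∑ n ∈ Finset.range m,
            (t * (((n : ℝ) + 1) * (KKT.Ek g ν n z -
              ∫ x : Fin (n + 1) → OnePoint E, g (n + 1) x
                ∂(Measure.pi fun _ : Fin (n + 1) => ν))) -
             t * t * (4 * C (n + 1) * ((n : ℝ) + 1) * ((n : ℝ) + 1))) := by
          rw [hc, hM, ← Finset.sum_sub_distrib, Finset.mul_sum, Finset.mul_sum,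
            ← Finset.sum_sub_distrib]
          exact Finset.sum_congr rfl fun n hn => by ring
        have h3 : ∑ n ∈ Finset.range m,
            ((∫ x : Fin (n + 1) → OnePoint E, g (n + 1) x
              ∂(Measure.pi fun _ : Fin (n + 1) => νt)) -
             ∫ x : Fin (n + 1) → OnePoint E, g (n + 1) x
              ∂(Measure.pi fun _ : Fin (n + 1) => ν)) =
            (∑ n ∈ Finset.range m, ∫ x : Fin (n + 1) → OnePoint E, g (n + 1) x
              ∂(Measure.pi fun _ : Fin (n + 1) => νt)) -
            ∑ n ∈ Finset.range m, ∫ x : Fin (n + 1) → OnePoint E, g (n + 1) x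
              ∂(Measure.pi fun _ : Fin (n + 1) => ν) := Finset.sum_sub_distrib _ _
        linarith [h1, h2, h3, hSig]
      rw [← hdz z] at hsum2
      have : t * (d z - c) ≤ t * (t * M) := by linarith [hsum2]
      have := (mul_le_mul_iff_right₀ ht0).1 this
      linarith
    have hlim : Tendsto (fun i : ℕ => (1 / ((i : ℝ) + 1)) * M) atTop (nhds 0) := by
      simpa using tendsto_one_div_add_atTop_nhds_zero_nat.mul_const M
    have hfin : d z - c ≤ 0 := by
      refine ge_of_tendsto' hlim fun i => hkey (1 / ((i : ℝ) + 1)) (by positivity) ?_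
      rw [div_le_one (by positivity)]
      have : (0:ℝ) ≤ (i : ℝ) := Nat.cast_nonneg i
      linarith
    linarith
  -- c is the ν-average of d
  have hintd : Integrable d ν := by
    refine KKT.integrable_of_bound ν d hdcont.aestronglyMeasurable
      (∑ n ∈ Finset.range m, ((n : ℝ) + 1) * C (n + 1)) ?_
    intro x
    rw [hdz x]
    refine (Finset.abs_sum_le_sum_abs _ _).trans (Finset.sum_le_sum fun n hn => ?_)
    rw [abs_mul, abs_of_nonneg (by positivity : (0:ℝ) ≤ (n : ℝ) + 1)]
    exact mul_le_mul_of_nonneg_left (hEkb n (Finset.mem_range.1 hn) x) (by positivity)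
  have hcint : ∫ x, d x ∂ν = c := by
    rw [integral_congr_ae (ae_of_all _ hdz), integral_finset_sum]
    · rw [hc]
      refine Finset.sum_congr rfl fun n hn => ?_
      have hn1 : n + 1 ≤ m := Finset.mem_range.1 hn
      rw [integral_const_mul]
      refine congrArg (((n : ℝ) + 1) * ·) ?_
      have := KKT.integral_pi_succAbove (fun _ : Fin (n + 1) => ν) (Fin.last n)
        (g (n + 1)) (hcont _ hn1) (C (n + 1)) (hCb _ hn1)
      rw [this]
      rfl
    · intro n hn
      refine (KKT.integrable_of_bound ν _ ?_ (((n : ℝ) + 1) * C (n + 1)) ?_)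
      · exact (continuous_const.mul (hEkcont n (Finset.mem_range.1 hn))).aestronglyMeasurable
      · intro x
        rw [abs_mul, abs_of_nonneg (by positivity : (0:ℝ) ≤ (n : ℝ) + 1)]
        exact mul_le_mul_of_nonneg_left (hEkb n (Finset.mem_range.1 hn) x) (by positivity)
  -- d is constant (= c) on the support of ν
  have hsupp : ∀ x ∈ measureSupport ν, d x = c := by
    intro x hx
    by_contra hne
    have hlt : d x < c := lt_of_le_of_ne (hdlec x) hne
    set r : ℝ := (d x + c) / 2 with hr
    have hrc : r < c := by rw [hr]; linarith
    have hxr : d x < r := by rw [hr]; linarith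
    set U : Set (OnePoint E) := d ⁻¹' (Set.Iio r) with hU
    have hUopen : IsOpen U := isOpen_Iio.preimage hdcont
    have hxU : x ∈ U := hxr
    have hUpos : 0 < ν U := hx U hUopen hxU
    have hUmeas : MeasurableSet U := hUopen.measurableSet
    have hsplit : ∫ y, d y ∂ν = (∫ y in U, d y ∂ν) + ∫ y in Uᶜ, d y ∂ν :=
      (integral_add_compl hUmeas hintd).symm
    have hIU : ∫ y in U, d y ∂ν ≤ r * (ν U).toReal := by
      calc ∫ y in U, d y ∂ν ≤ ∫ _y in U, r ∂ν :=
            setIntegral_mono_on (hintd.integrableOn) (integrableOn_const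
              (measure_lt_top ν U).ne) hUmeas (fun y hy => le_of_lt hy)
        _ = r * (ν U).toReal := by rw [setIntegral_const, smul_eq_mul, mul_comm]; rfl
    have hIUc : ∫ y in Uᶜ, d y ∂ν ≤ c * (ν Uᶜ).toReal := by
      calc ∫ y in Uᶜ, d y ∂ν ≤ ∫ _y in Uᶜ, c ∂ν :=
            setIntegral_mono_on (hintd.integrableOn) (integrableOn_const
              (measure_lt_top ν Uᶜ).ne) hUmeas.compl (fun y _ => hdlec y)
        _ = c * (ν Uᶜ).toReal := by rw [setIntegral_const, smul_eq_mul, mul_comm]; rfl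
    have hmeasadd : (ν U).toReal + (ν Uᶜ).toReal = 1 := by
      rw [← ENNReal.toReal_add (measure_lt_top ν U).ne (measure_lt_top ν Uᶜ).ne,
        measure_add_measure_compl hUmeas, measure_univ, ENNReal.toReal_one]
    have hu : 0 < (ν U).toReal :=
      ENNReal.toReal_pos hUpos.ne' (measure_lt_top ν U).ne
    have hend : c = (∫ y in U, d y ∂ν) + ∫ y in Uᶜ, d y ∂ν := by
      rw [← hcint]; exact hsplit
    have hsp : c * ((ν U).toReal + (ν Uᶜ).toReal) = c := by rw [hmeasadd, mul_one]
    nlinarith [hend, hIU, hIUc, hsp, mul_pos hu (sub_pos.2 hrc)]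
  -- conclusions
  have hne : (measureSupport ν).Nonempty := measureSupport_nonempty ν
  obtain ⟨x₀, hx₀⟩ := hne
  have hsup : (⨆ z : OnePoint E, d z) = c := by
    have hbdd : BddAbove (Set.range d) := ⟨c, by rintro _ ⟨z, rfl⟩; exact hdlec z⟩
    refine le_antisymm (ciSup_le hdlec) ?_
    have := le_ciSup hbdd x₀
    rw [hsupp x₀ hx₀] at this
    exact this
  refine ⟨?_, ?_, ?_⟩
  · intro x hx z
    rw [hsupp x hx]
    exact hdlec z
  · intro x hx y hy
    rw [hsupp x hx, hsupp y hy]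
  · intro μ hμsub
    haveI : IsProbabilityMeasure (μ : Measure (OnePoint E)) := μ.prop
    have hae : d =ᵐ[(μ : Measure (OnePoint E))] fun _ => c := by
      have hsubset : {x | d x ≠ c} ⊆ (measureSupport (μ : Measure (OnePoint E)))ᶜ := by
        intro x hxne hmem
        exact hxne (hsupp x (hμsub hmem))
      exact measure_mono_null hsubset
        (measure_compl_measureSupport (μ : Measure (OnePoint E)))
    rw [integral_congr_ae hae, integral_const, probReal_univ, hsup]
    simp
end

section
/- Let K be a compact metrizable space, D ⊆ C(K,ℝ) a linear subspace, and (T_t)_{t∈ℝ} a strongly continuous group of positive isometries of C(K,ℝ). Let A : C(K,ℝ) → C(K,ℝ) be a map such that for every g ∈ D both limits A g = lim_{t→0} (T_t g − g)/t and A(A g) = lim_{t→0} (T_t (A g) − A g)/t exist in supremum norm. Let m ≥ 1, g₁,…,g_m ∈ D, let φ be a real polynomial in m variables, and suppose ν_* ∈ M₁(K) maximizes ν ↦ φ(⟨g₁,ν⟩,…,⟨g_m,ν⟩) over M₁(K). Set v := (⟨g₁,ν_*⟩,…,⟨g_m,ν_*⟩). Then for every finite nonnegative Borel measure μ on K with μ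 ≤ ν_*, one has Σ_{i=1}^{m} ∂_iφ(v) ∫_K A(A g_i) dμ + Σ_{i,j=1}^{m} ∂²_{ij}φ(v) (∫_K A g_i dμ)(∫_K A g_j dμ) ≤ 0. -/
open MeasureTheory Filter Topology

section Aux

variable {K : Type*} [TopologicalSpace K] [CompactSpace K]
    [MeasurableSpace K] [BorelSpace K]

lemma integ_cm (ρ : Measure K) [IsFiniteMeasure ρ] (f : C(K,ℝ)) :
    Integrable (fun x => f x) ρ :=
  f.continuous.integrable_of_hasCompactSupport (HasCompactSupport.of_compactSpace _)

lemma cont_integ (ρ : Measure K) [IsFiniteMeasure ρ] :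
    Continuous (fun f : C(K,ℝ) => ∫ x, f x ∂ρ) := by
  have hb : ∀ f : C(K,ℝ), ‖∫ x, f x ∂ρ‖ ≤ (ρ Set.univ).toReal * ‖f‖ := by
    intro f
    calc ‖∫ x, f x ∂ρ‖ ≤ ‖f‖ * (ρ Set.univ).toReal :=
      norm_integral_le_of_norm_le_const (Eventually.of_forall fun x => f.norm_coe_le_norm x)
    _ = _ := mul_comm _ _
  let L : C(K,ℝ) →+ ℝ := AddMonoidHom.mk' (fun f : C(K,ℝ) => ∫ x, f x ∂ρ)
    (fun f h => by
        simp_rw [ContinuousMap.add_apply]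
        exact integral_add (f.continuous.integrable_of_hasCompactSupport
          (HasCompactSupport.of_compactSpace _))
          (h.continuous.integrable_of_hasCompactSupport (HasCompactSupport.of_compactSpace _)))
  exact AddMonoidHomClass.continuous_of_bound L _ hb

lemma integ_sum_smul {m : ℕ}
    (ρ : Measure K) [IsFiniteMeasure ρ] (c : Fin m → ℝ) (F : Fin m → C(K,ℝ)) :
    ∫ x, (∑ i, c i • F i) x ∂ρ = ∑ i, c i * ∫ x, (F i) x ∂ρ := by
  have h1 : (fun x => (∑ i, c i • F i) x) = fun x => ∑ i, c i * (F i) x := by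
    funext x
    rw [ContinuousMap.coe_sum]
    simp [Finset.sum_apply]
  rw [h1, integral_finset_sum _ (fun i _ => ((integ_cm ρ (F i)).const_mul _))]
  simp_rw [integral_const_mul]

lemma aux_deriv (T : ℝ → C(K, ℝ) →ₗ[ℝ] C(K, ℝ))
    (hTgrp : ∀ (s t : ℝ) (f : C(K, ℝ)), T (s + t) f = T s (T t f))
    (hTiso : ∀ (t : ℝ) (f : C(K, ℝ)), ‖T t f‖ = ‖f‖)
    (ρ : Measure K) [IsFiniteMeasure ρ] (f h2 : C(K,ℝ))
    (hf : Tendsto (fun s : ℝ => s⁻¹ • (T s f - f)) (𝓝[≠] 0) (𝓝 h2)) (t : ℝ) :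
    HasDerivAt (fun t => ∫ x, (T t f) x ∂ρ) (∫ x, (T t h2) x ∂ρ) t := by
  rw [hasDerivAt_iff_tendsto_slope]
  have hTt : Continuous (T t) :=
    (AddMonoidHomClass.isometry_of_norm (T t) (hTiso t)).continuous
  have hsub : Tendsto (fun s : ℝ => s - t) (𝓝[≠] t) (𝓝[≠] 0) := by
    apply Tendsto.inf
    · simpa using (continuous_sub_right t).tendsto' t 0 (by simp)
    · exact tendsto_principal_principal.2 (fun s hs => sub_ne_zero.2 hs)
  have main : Tendsto (fun s : ℝ => ∫ x, (T t ((s - t)⁻¹ • (T (s - t) f - f))) x ∂ρ)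
      (𝓝[≠] t) (𝓝 (∫ x, (T t h2) x ∂ρ)) := by
    have := ((cont_integ ρ).comp hTt).continuousAt (x := h2)
    exact (this.tendsto.comp hf).comp hsub
  apply main.congr'
  filter_upwards [self_mem_nhdsWithin] with s hs
  have hst : s - t ≠ 0 := sub_ne_zero.2 hs
  have key : (T s) f = T t (T (s - t) f) := by
    rw [← hTgrp t (s - t) f]; ring_nf
  have expand : (fun x => (T t ((s - t)⁻¹ • (T (s - t) f - f))) x)
      = fun x => (s - t)⁻¹ • ((T t (T (s-t) f)) x - (T t f) x) := by
    funext x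
    rw [_root_.map_smul, map_sub]
    simp [ContinuousMap.smul_apply, ContinuousMap.sub_apply]
  rw [slope_def_field, key, expand, integral_smul]
  have : ∫ x, ((T t (T (s-t) f)) x - (T t f) x) ∂ρ
      = (∫ x, (T t (T (s-t) f)) x ∂ρ) - ∫ x, (T t f) x ∂ρ :=
    integral_sub (integ_cm ρ _) (integ_cm ρ _)
  rw [this, smul_eq_mul, div_eq_mul_inv, mul_comm]

omit [MeasurableSpace K] [BorelSpace K] in
lemma T_one [Nonempty K] (T : ℝ → C(K, ℝ) →ₗ[ℝ] C(K, ℝ))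
    (hT0 : T 0 = LinearMap.id)
    (hTgrp : ∀ (s t : ℝ) (f : C(K, ℝ)), T (s + t) f = T s (T t f))
    (hTiso : ∀ (t : ℝ) (f : C(K, ℝ)), ‖T t f‖ = ‖f‖)
    (hTpos : ∀ (t : ℝ) (f : C(K, ℝ)), 0 ≤ f → 0 ≤ T t f) (t : ℝ) :
    T t (1 : C(K,ℝ)) = 1 := by
  have hle : ∀ s : ℝ, T s (1 : C(K,ℝ)) ≤ 1 := by
    intro s
    rw [ContinuousMap.le_def]
    intro x
    have h1 : ‖T s (1 : C(K,ℝ))‖ = 1 := by rw [hTiso]; exact norm_one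
    have h2 := (T s (1 : C(K,ℝ))).norm_coe_le_norm x
    rw [h1] at h2
    calc (T s (1:C(K,ℝ))) x ≤ ‖(T s (1:C(K,ℝ))) x‖ := le_abs_self _
    _ ≤ 1 := h2
    _ = (1 : C(K,ℝ)) x := by simp
  have hge : (1 : C(K,ℝ)) ≤ T t 1 := by
    have h2 : (0:C(K,ℝ)) ≤ 1 - T (-t) 1 := by
      rw [sub_nonneg]; exact hle (-t)
    have h3 := hTpos t _ h2
    rw [map_sub] at h3
    have h4 : T t (T (-t) (1:C(K,ℝ))) = 1 := by
      rw [← hTgrp t (-t) 1]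
      simp [hT0]
    rw [h4, sub_nonneg] at h3
    exact h3
  exact le_antisymm (hle t) hge

lemma dirac_combo [Nonempty K] [TopologicalSpace.MetrizableSpace K]
    {m : ℕ} (g : Fin m → C(K, ℝ)) (c : Fin m → ℝ)
    (hmem : c ∈ convexHull ℝ (Set.range (fun x : K => fun i => g i x))) :
    ∃ ν : ProbabilityMeasure K, ∀ i, ∫ x, g i x ∂(ν : Measure K) = c i := by
  rw [convexHull_eq] at hmem
  obtain ⟨ι, tf, w, z, hw0, hw1, hzs, hcm⟩ := hmem
  have hz : ∀ j ∈ tf, ∃ x : K, (fun i => g i x) = z j := fun j hj => hzs j hj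
  classical
  set pt : ι → K := fun j =>
    if h : ∃ x : K, (fun i => g i x) = z j then h.choose else Classical.arbitrary K with hpt
  have hptz : ∀ j ∈ tf, (fun i => g i (pt j)) = z j := by
    intro j hj
    simp only [hpt, dif_pos (hz j hj)]
    exact (hz j hj).choose_spec
  set ν₀ : Measure K := ∑ j ∈ tf, ENNReal.ofReal (w j) • Measure.dirac (pt j) with hν₀
  have hprob : IsProbabilityMeasure ν₀ := by
    constructor
    rw [hν₀]
    rw [Measure.finset_sum_apply]
    simp only [Measure.smul_apply, smul_eq_mul]
    simp only [measure_univ, mul_one]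
    rw [← ENNReal.ofReal_sum_of_nonneg hw0, hw1, ENNReal.ofReal_one]
  have hint : ∀ f : C(K,ℝ), ∫ x, f x ∂ν₀ = ∑ j ∈ tf, w j * f (pt j) := by
    intro f
    rw [hν₀, integral_finset_sum_measure
      (fun j _ => (integ_cm (Measure.dirac (pt j)) f).smul_measure ENNReal.ofReal_ne_top)]
    refine Finset.sum_congr rfl fun j hj => ?_
    rw [integral_smul_measure, integral_dirac, ENNReal.toReal_ofReal (hw0 j hj), smul_eq_mul]
  refine ⟨⟨ν₀, hprob⟩, fun i => ?_⟩
  have hc : ∑ j ∈ tf, w j • z j = c := by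
    rw [← Finset.centerMass_eq_of_sum_1 _ _ hw1]; exact hcm
  calc ∫ x, g i x ∂ν₀ = ∑ j ∈ tf, w j * g i (pt j) := hint (g i)
  _ = ∑ j ∈ tf, w j * (z j i) := by
      refine Finset.sum_congr rfl fun j hj => ?_
      rw [← hptz j hj]
  _ = (∑ j ∈ tf, w j • z j) i := by
      rw [Finset.sum_apply]
      simp [Pi.smul_apply]
  _ = c i := by rw [hc]

end Aux

open MvPolynomial in
lemma mv_chain {m : ℕ} (φ : MvPolynomial (Fin m) ℝ) (y y' : ℝ → Fin m → ℝ)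
    (hy : ∀ i t, HasDerivAt (fun t => y t i) (y' t i) t) (t : ℝ) :
    HasDerivAt (fun t => MvPolynomial.eval (y t) φ)
      (∑ i, MvPolynomial.eval (y t) (MvPolynomial.pderiv i φ) * y' t i) t := by
  induction φ using MvPolynomial.induction_on with
  | C a => simpa using hasDerivAt_const t a
  | add p q hp hq =>
      have := hp.fun_add hq
      simp only [map_add] at this ⊢
      simpa [add_mul, Finset.sum_add_distrib] using this
  | mul_X p i hp =>
      have key := hp.fun_mul (hy i t)
      simp only [map_mul, eval_X] at key ⊢
      refine key.congr_deriv (Eq.symm ?_)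
      have expand : ∀ j, eval (y t) (pderiv j (p * X i))
          = eval (y t) (pderiv j p) * y t i + eval (y t) p * (if j = i then 1 else 0) := by
        intro j
        rw [pderiv_mul, pderiv_X]
        rcases eq_or_ne j i with h | h
        · subst h; simp
        · simp [Pi.single_apply, h, Ne.symm h]
      simp only [expand, add_mul, Finset.sum_add_distrib]
      congr 1
      · rw [Finset.sum_mul]; exact Finset.sum_congr rfl fun j _ => by ring
      · simp [mul_ite, ite_mul]

lemma second_order {q q' : ℝ → ℝ} {Q2 : ℝ}
    (hq : ∀ t, HasDerivAt q (q' t) t) (hq' : HasDerivAt q' Q2 0)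
    (hmax : ∀ t, q t ≤ q 0) : Q2 ≤ 0 := by
  have hq'0 : q' 0 = 0 :=
    IsLocalMax.hasDerivAt_eq_zero (Eventually.of_forall hmax) (hq 0)
  by_contra hpos
  push_neg at hpos
  have hslope : Tendsto (slope q' 0) (𝓝[≠] 0) (𝓝 Q2) :=
    hasDerivAt_iff_tendsto_slope.1 hq'
  have hev : ∀ᶠ s in 𝓝[≠] (0:ℝ), 0 < slope q' 0 s := hslope.eventually_const_lt hpos
  rw [eventually_nhdsWithin_iff] at hev
  rw [Metric.eventually_nhds_iff] at hev
  obtain ⟨δ, hδpos, hδ⟩ := hev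
  have hpos' : ∀ s, 0 < s → s < δ → 0 < q' s := by
    intro s hs hsδ
    have h1 : 0 < slope q' 0 s := by
      apply hδ (by simpa [abs_of_pos hs] using hsδ) (ne_of_gt hs)
    rw [slope_def_field, hq'0] at h1
    have h2 := mul_pos h1 hs
    rw [sub_zero, sub_zero, div_mul_cancel₀ _ (ne_of_gt hs)] at h2
    linarith
  have hmono : StrictMonoOn q (Set.Icc 0 (δ/2)) := by
    apply strictMonoOn_of_deriv_pos (convex_Icc _ _)
    · exact fun x _ => ((hq x).differentiableAt.continuousAt).continuousWithinAt
    · intro x hx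
      rw [interior_Icc] at hx
      rw [(hq x).deriv]
      exact hpos' x hx.1 (lt_trans hx.2 (by linarith))
  have : q 0 < q (δ/2) :=
    hmono (Set.left_mem_Icc.2 (by linarith)) (Set.right_mem_Icc.2 (by linarith)) (by linarith)
  exact absurd (hmax (δ/2)) (not_le.2 this)

/-- **second-order optimality along a group of isometries.** -/
theorem isometry_group_optimality
    {K : Type*} [TopologicalSpace K] [CompactSpace K] [TopologicalSpace.MetrizableSpace K]
    [MeasurableSpace K] [BorelSpace K]
    (D : Submodule ℝ C(K, ℝ))
    (T : ℝ → C(K, ℝ) →ₗ[ℝ] C(K, ℝ))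
    (hT0 : T 0 = LinearMap.id)
    (hTgrp : ∀ (s t : ℝ) (f : C(K, ℝ)), T (s + t) f = T s (T t f))
    (hTiso : ∀ (t : ℝ) (f : C(K, ℝ)), ‖T t f‖ = ‖f‖)
    (hTpos : ∀ (t : ℝ) (f : C(K, ℝ)), 0 ≤ f → 0 ≤ T t f)
    (hTcont : ∀ f : C(K, ℝ), Continuous fun t : ℝ => T t f)
    (A : C(K, ℝ) → C(K, ℝ))
    (hA : ∀ g ∈ D, Tendsto (fun t : ℝ => t⁻¹ • (T t g - g)) (𝓝[≠] 0) (𝓝 (A g)))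
    (hA2 : ∀ g ∈ D, Tendsto (fun t : ℝ => t⁻¹ • (T t (A g) - A g)) (𝓝[≠] 0) (𝓝 (A (A g))))
    (m : ℕ) (hm : 1 ≤ m) (g : Fin m → C(K, ℝ)) (hg : ∀ i, g i ∈ D)
    (φ : MvPolynomial (Fin m) ℝ)
    (ν_star : ProbabilityMeasure K)
    (hmax : ∀ ν : ProbabilityMeasure K,
      MvPolynomial.eval (fun i => ∫ x, g i x ∂(ν : Measure K)) φ ≤
      MvPolynomial.eval (fun i => ∫ x, g i x ∂(ν_star : Measure K)) φ)
    (μ : FiniteMeasure K) (hμ : (μ : Measure K) ≤ (ν_star : Measure K)) :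
    (∑ i : Fin m,
        MvPolynomial.eval (fun j => ∫ x, g j x ∂(ν_star : Measure K))
          (MvPolynomial.pderiv i φ) * ∫ x, A (A (g i)) x ∂(μ : Measure K))
    + (∑ i : Fin m, ∑ j : Fin m,
        MvPolynomial.eval (fun l => ∫ x, g l x ∂(ν_star : Measure K))
          (MvPolynomial.pderiv i (MvPolynomial.pderiv j φ)) *
        ((∫ x, A (g i) x ∂(μ : Measure K)) * (∫ x, A (g j) x ∂(μ : Measure K))))
    ≤ 0 := by
  classical
  have hKne : Nonempty K := by
    by_contra h
    rw [not_nonempty_iff] at h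
    have h1 := measure_univ (μ := (ν_star : Measure K))
    rw [Set.univ_eq_empty_iff.2 h, measure_empty] at h1
    exact zero_ne_one h1
  set ρμ : Measure K := (μ : Measure K) with hρμ
  set ρs : Measure K := (ν_star : Measure K) with hρs
  haveI : IsFiniteMeasure ρμ := μ.2
  haveI : IsProbabilityMeasure ρs := ν_star.2
  set v : Fin m → ℝ := fun i => ∫ x, g i x ∂ρs with hv
  set w : Fin m → ℝ → ℝ := fun i t => ∫ x, (T t (g i)) x ∂ρμ with hw_def
  set w' : Fin m → ℝ → ℝ := fun i t => ∫ x, (T t (A (g i))) x ∂ρμ with hw'_def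
  set w'' : Fin m → ℝ → ℝ := fun i t => ∫ x, (T t (A (A (g i)))) x ∂ρμ with hw''_def
  have hw : ∀ i t, HasDerivAt (w i) (w' i t) t := fun i t =>
    aux_deriv T hTgrp hTiso ρμ (g i) (A (g i)) (hA _ (hg i)) t
  have hw' : ∀ i t, HasDerivAt (w' i) (w'' i t) t := fun i t =>
    aux_deriv T hTgrp hTiso ρμ (A (g i)) (A (A (g i))) (hA2 _ (hg i)) t
  set y : ℝ → Fin m → ℝ := fun t i => v i - w i 0 + w i t with hy_def
  set y' : ℝ → Fin m → ℝ := fun t i => w' i t with hy'_def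
  have hy : ∀ i t, HasDerivAt (fun t => y t i) (y' t i) t := fun i t =>
    (hw i t).const_add _
  have hy0 : y 0 = v := by
    funext i
    simp [hy_def]
  set q : ℝ → ℝ := fun t => MvPolynomial.eval (y t) φ with hq_def
  set q' : ℝ → ℝ := fun t =>
    ∑ i, MvPolynomial.eval (y t) (MvPolynomial.pderiv i φ) * w' i t with hq'_def
  have hq : ∀ t, HasDerivAt q (q' t) t := fun t => mv_chain φ y y' hy t
  set Q2 : ℝ := ∑ i,
      ((∑ j, MvPolynomial.eval (y 0) (MvPolynomial.pderiv j (MvPolynomial.pderiv i φ)) * w' j 0)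
        * w' i 0
      + MvPolynomial.eval (y 0) (MvPolynomial.pderiv i φ) * w'' i 0) with hQ2_def
  have hq' : HasDerivAt q' Q2 0 := by
    apply HasDerivAt.fun_sum
    intro i _
    exact (mv_chain (MvPolynomial.pderiv i φ) y y' hy 0).mul (hw' i 0)
  -- maximality
  have hT1 : ∀ t, T t (1:C(K,ℝ)) = 1 := T_one T hT0 hTgrp hTiso hTpos
  have hT00 : ∀ f : C(K,ℝ), T 0 f = f := by intro f; rw [hT0]; rfl
  have hmaxq : ∀ t, q t ≤ q 0 := by
    intro t
    set G : K → (Fin m → ℝ) := fun x i => g i x with hG_def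
    set S : Set (Fin m → ℝ) := convexHull ℝ (Set.range G) with hS_def
    have hmem : y t ∈ closure S := by
      by_contra hnot
      obtain ⟨f, u, hfu, hux⟩ := geometric_hahn_banach_closed_point
        ((convex_convexHull ℝ _).closure) isClosed_closure hnot
      set c : Fin m → ℝ := fun i => f (Pi.single i 1) with hc_def
      have hfz : ∀ z : Fin m → ℝ, f z = ∑ i, z i * c i := by
        intro z
        have hz : z = ∑ i, z i • (Pi.single i (1:ℝ) : Fin m → ℝ) := by
          funext j
          rw [Finset.sum_apply]
          simp [Pi.single_apply]
        conv_lhs => rw [hz]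
        rw [map_sum]
        exact Finset.sum_congr rfl fun i _ => by rw [_root_.map_smul]; simp [hc_def]
      set h₀ : C(K,ℝ) := ∑ i, c i • g i with hh₀_def
      have hh₀x : ∀ x : K, h₀ x = ∑ i, c i * g i x := by
        intro x
        rw [hh₀_def, ContinuousMap.coe_sum]
        simp [Finset.sum_apply]
      have hlt : ∀ x : K, h₀ x < u := by
        intro x
        have hx : G x ∈ closure S :=
          subset_closure (subset_convexHull ℝ _ (Set.mem_range_self x))
        have := hfu (G x) hx
        rw [hfz (G x)] at this
        calc h₀ x = ∑ i, c i * g i x := hh₀x x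
        _ = ∑ i, G x i * c i := Finset.sum_congr rfl fun i _ => by rw [hG_def]; ring
        _ < u := this
      -- the functional value at y t
      have hfyt : f (y t) = (∫ x, h₀ x ∂ρs) - (∫ x, h₀ x ∂ρμ) + ∫ x, (T t h₀) x ∂ρμ := by
        rw [hfz]
        have hTh₀ : T t h₀ = ∑ i, c i • T t (g i) := by
          rw [hh₀_def, map_sum]
          exact Finset.sum_congr rfl fun i _ => by rw [_root_.map_smul]
        rw [hTh₀]
        rw [integ_sum_smul ρs c g, integ_sum_smul ρμ c g,
          integ_sum_smul ρμ c (fun i => T t (g i))]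
        rw [← Finset.sum_sub_distrib, ← Finset.sum_add_distrib]
        refine Finset.sum_congr rfl fun i _ => ?_
        simp only [hy_def, hv, hw_def, hT00]
        ring
      -- positivity: f (y t) ≤ u
      set e : C(K,ℝ) := u • (1:C(K,ℝ)) - h₀ with he_def
      have he0 : (0:C(K,ℝ)) ≤ e := by
        rw [ContinuousMap.le_def]
        intro x
        simp only [he_def, ContinuousMap.sub_apply, ContinuousMap.smul_apply,
          ContinuousMap.one_apply, ContinuousMap.zero_apply, smul_eq_mul, mul_one]
        linarith [hlt x]
      have hint_e_s : ∫ x, e x ∂ρs = u - ∫ x, h₀ x ∂ρs := by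
        have : (fun x => e x) = fun x => u - h₀ x := by
          funext x; simp [he_def]
        rw [this, integral_sub (integrable_const u) (integ_cm ρs h₀)]
        simp [measure_univ]
      have hint_e_μ : ∫ x, e x ∂ρμ = u * (ρμ Set.univ).toReal - ∫ x, h₀ x ∂ρμ := by
        have : (fun x => e x) = fun x => u - h₀ x := by
          funext x; simp [he_def]
        rw [this, integral_sub (integrable_const u) (integ_cm ρμ h₀)]
        simp [integral_const, smul_eq_mul, mul_comm, Measure.real]
      have hint_Te : ∫ x, (T t e) x ∂ρμ = u * (ρμ Set.univ).toReal - ∫ x, (T t h₀) x ∂ρμ := by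
        have hTe : T t e = u • (1:C(K,ℝ)) - T t h₀ := by
          rw [he_def, map_sub, _root_.map_smul, hT1]
        rw [hTe]
        have : (fun x => (u • (1:C(K,ℝ)) - T t h₀) x) = fun x => u - (T t h₀) x := by
          funext x; simp
        rw [this, integral_sub (integrable_const u) (integ_cm ρμ _)]
        simp [integral_const, smul_eq_mul, mul_comm, Measure.real]
      have hkey : 0 ≤ u - f (y t) := by
        have h1 : ∫ x, e x ∂ρμ ≤ ∫ x, e x ∂ρs :=
          integral_mono_measure hμ (Eventually.of_forall fun x => he0 x) (integ_cm ρs e)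
        have h2 : 0 ≤ ∫ x, (T t e) x ∂ρμ :=
          integral_nonneg fun x => (hTpos t e he0) x
        rw [hfyt]
        rw [hint_e_s, hint_e_μ] at h1
        rw [hint_Te] at h2
        linarith
      linarith [hux]
    -- conclude via dirac_combo and continuity
    have hle : ∀ z ∈ S, MvPolynomial.eval z φ ≤ MvPolynomial.eval v φ := by
      intro z hz
      obtain ⟨ν, hν⟩ := dirac_combo g z hz
      have := hmax ν
      rwa [show (fun i => ∫ x, g i x ∂(ν : Measure K)) = z from funext hν] at this
    have hcl : IsClosed {z : Fin m → ℝ |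
        MvPolynomial.eval z φ ≤ MvPolynomial.eval v φ} :=
      isClosed_le (MvPolynomial.continuous_eval φ) continuous_const
    have this : MvPolynomial.eval (y t) φ ≤ MvPolynomial.eval v φ := closure_minimal hle hcl hmem
    simpa [hq_def, hy0] using this
  have hQ2 : Q2 ≤ 0 := second_order hq hq' hmaxq
  -- final algebra
  have hgoal : (∑ i : Fin m,
        MvPolynomial.eval (fun j => ∫ x, g j x ∂ρs)
          (MvPolynomial.pderiv i φ) * ∫ x, A (A (g i)) x ∂ρμ)
    + (∑ i : Fin m, ∑ j : Fin m,
        MvPolynomial.eval (fun l => ∫ x, g l x ∂ρs)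
          (MvPolynomial.pderiv i (MvPolynomial.pderiv j φ)) *
        ((∫ x, A (g i) x ∂ρμ) * (∫ x, A (g j) x ∂ρμ))) = Q2 := by
    have ha : ∀ i, w' i 0 = ∫ x, A (g i) x ∂ρμ := by
      intro i; simp only [hw'_def, hT00]
    have hb : ∀ i, w'' i 0 = ∫ x, A (A (g i)) x ∂ρμ := by
      intro i; simp only [hw''_def, hT00]
    have hvv : (fun j => ∫ x, g j x ∂ρs) = v := rfl
    rw [hQ2_def, hy0, Finset.sum_add_distrib]
    rw [add_comm]
    congr 1
    · rw [Finset.sum_comm]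
      refine Finset.sum_congr rfl fun i _ => ?_
      rw [Finset.sum_mul]
      refine Finset.sum_congr rfl fun j _ => ?_
      rw [ha i, ha j, hvv]
      ring
    · exact Finset.sum_congr rfl fun i _ => by rw [hb i, hvv]
  rw [hgoal]
  exact hQ2
end

section
/- Let K be a compact metrizable space and (T_t)_{t∈ℝ} a strongly continuous group of positive isometries of C(K,ℝ). Let f ∈ C(K,ℝ) be such that both limits A f = lim_{t→0} (T_t f − f)/t and A(A f) = lim_{t→0} (T_t(A f) − A f)/t exist in supremum norm. If x ∈ K satisfies f(x) = sup_K f ≥ 0, then A f(x) = 0 and A(A f)(x) ≤ 0; that is, the square of the generator satisfies the positive maximum principle. -/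
open MeasureTheory Filter Topology

/-- Let `K` be compact metrizable and `(T_t)` a strongly continuous group of
positive isometries of `C(K,ℝ)`. If `f ∈ C(K,ℝ)` is such that both `Af = lim (T_t f − f)/t`
and `A(Af) = lim (T_t(Af) − Af)/t` exist in supremum norm, and `x ∈ K` satisfies
`f(x) = sup_K f ≥ 0`, then `Af(x) = 0` and `A(Af)(x) ≤ 0`: the square of the generator
satisfies the positive maximum principle. -/
theorem generator_squared_positive_maximum_principle
    {K : Type*} [TopologicalSpace K] [CompactSpace K] [TopologicalSpace.MetrizableSpace K]
    (T : ℝ → C(K, ℝ) →ₗ[ℝ] C(K, ℝ))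
    (hT0 : T 0 = LinearMap.id)
    (hTgrp : ∀ (s t : ℝ) (f : C(K, ℝ)), T (s + t) f = T s (T t f))
    (hTiso : ∀ (t : ℝ) (f : C(K, ℝ)), ‖T t f‖ = ‖f‖)
    (hTpos : ∀ (t : ℝ) (f : C(K, ℝ)), 0 ≤ f → 0 ≤ T t f)
    (hTcont : ∀ f : C(K, ℝ), Continuous fun t : ℝ => T t f)
    (f Af AAf : C(K, ℝ))
    (hAf : Tendsto (fun t : ℝ => t⁻¹ • (T t f - f)) (𝓝[≠] 0) (𝓝 Af))
    (hAAf : Tendsto (fun t : ℝ => t⁻¹ • (T t Af - Af)) (𝓝[≠] 0) (𝓝 AAf))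
    (x : K) (hxmax : ∀ y : K, f y ≤ f x) (hx0 : 0 ≤ f x) :
    Af x = 0 ∧ AAf x ≤ 0 := by
  classical
  have heval : Continuous fun u : C(K, ℝ) => u x := continuous_eval_const x
  have hTcontMap : ∀ s : ℝ, Continuous (T s) := fun s =>
    AddMonoidHomClass.continuous_of_bound (T s) 1 (fun u => by rw [hTiso, one_mul])
  set g : ℝ → ℝ := fun t => T t f x with hg_def
  set h : ℝ → ℝ := fun t => T t Af x with hh_def
  have hg0 : g 0 = f x := by simp [hg_def, hT0]
  have hh0 : h 0 = Af x := by simp [hh_def, hT0]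
  -- Step 1: g t ≤ f x for all t
  have hle : ∀ t : ℝ, g t ≤ f x := by
    intro t
    set c : C(K, ℝ) := ContinuousMap.const K (f x) with hc
    have h1 : (0 : C(K, ℝ)) ≤ c - f := by
      rw [ContinuousMap.le_def]
      intro y
      simpa [hc, sub_nonneg] using hxmax y
    have h2 : g t ≤ T t c x := by
      have h3 := hTpos t _ h1
      rw [map_sub] at h3
      have := ContinuousMap.le_def.mp h3 x
      simp only [ContinuousMap.zero_apply, ContinuousMap.sub_apply] at this
      linarith
    have h4 : T t c x ≤ ‖T t c‖ :=
      le_trans (le_abs_self _) ((T t c).norm_coe_le_norm x)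
    have h5 : ‖T t c‖ ≤ f x := by
      rw [hTiso, hc]
      rw [ContinuousMap.norm_le _ hx0]
      intro y
      simp [abs_of_nonneg hx0]
    linarith
  -- shift lemma
  have hshift : ∀ s : ℝ, Tendsto (fun u : ℝ => u - s) (𝓝[≠] s) (𝓝[≠] (0 : ℝ)) := by
    intro s
    apply tendsto_nhdsWithin_of_tendsto_nhds_of_eventually_within
    · have h0 : Tendsto (fun u : ℝ => u - s) (𝓝 s) (𝓝 (s - s)) :=
        (continuous_id.sub continuous_const).tendsto s
      rw [sub_self] at h0
      exact h0.mono_left nhdsWithin_le_nhds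
    · filter_upwards [self_mem_nhdsWithin] with u hu
      simpa [sub_eq_zero] using hu
  -- Step 2: derivative of g
  have hd : ∀ s : ℝ, HasDerivAt g (h s) s := by
    intro s
    rw [hasDerivAt_iff_tendsto_slope]
    have key : Tendsto (fun u : ℝ => (T s ((u - s)⁻¹ • (T (u - s) f - f))) x)
        (𝓝[≠] s) (𝓝 (h s)) := by
      have := (heval.comp (hTcontMap s)).continuousAt.tendsto.comp (hAf.comp (hshift s))
      exact this
    refine key.congr' ?_
    filter_upwards [self_mem_nhdsWithin] with u hu
    have hune : u - s ≠ 0 := sub_ne_zero.mpr hu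
    have hgroup : T u f = T s (T (u - s) f) := by
      rw [← hTgrp s (u - s) f]
      ring_nf
    rw [slope_def_field, _root_.map_smul, map_sub]
    simp only [ContinuousMap.smul_apply, ContinuousMap.sub_apply, smul_eq_mul, hg_def]
    rw [hgroup]
    field_simp
  -- Step 3: Af x = 0
  have hmax : IsLocalMax g 0 := by
    apply Filter.Eventually.of_forall
    intro t
    rw [hg0]
    exact hle t
  have hAfx : Af x = 0 := by
    have := hmax.hasDerivAt_eq_zero (hd 0)
    rw [hh0] at this
    exact this
  refine ⟨hAfx, ?_⟩
  -- Step 4: derivative of h at 0 is AAf x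
  have hd2 : HasDerivAt h (AAf x) 0 := by
    rw [hasDerivAt_iff_tendsto_slope]
    have key : Tendsto (fun u : ℝ => ((u⁻¹ • (T u Af - Af)) : C(K, ℝ)) x)
        (𝓝[≠] (0 : ℝ)) (𝓝 (AAf x)) := heval.continuousAt.tendsto.comp hAAf
    refine key.congr' ?_
    filter_upwards [self_mem_nhdsWithin] with u hu
    have hune : (u : ℝ) ≠ 0 := hu
    rw [slope_def_field, hh0, sub_zero]
    simp only [ContinuousMap.smul_apply, ContinuousMap.sub_apply, smul_eq_mul, hh_def]
    field_simp
  -- Step 5: mean value argument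
  have hcseq : ∀ n : ℕ, ∃ cn : ℝ, cn ∈ Set.Ioo (0 : ℝ) ((n + 1 : ℝ)⁻¹) ∧ h cn ≤ 0 := by
    intro n
    have hpos : (0 : ℝ) < (n + 1 : ℝ)⁻¹ := by positivity
    obtain ⟨cn, hcn, hceq⟩ := exists_hasDerivAt_eq_slope g h hpos
      (fun s _ => (hd s).continuousAt.continuousWithinAt)
      (fun s _ => hd s)
    refine ⟨cn, hcn, ?_⟩
    rw [hceq]
    apply div_nonpos_of_nonpos_of_nonneg
    · rw [hg0]; linarith [hle ((n + 1 : ℝ)⁻¹)]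
    · linarith
  choose c hc hhc using hcseq
  have hcpos : ∀ n, 0 < c n := fun n => (hc n).1
  have hctend : Tendsto c atTop (𝓝[≠] (0 : ℝ)) := by
    apply tendsto_nhdsWithin_of_tendsto_nhds_of_eventually_within
    · have hub : Tendsto (fun n : ℕ => ((n : ℝ) + 1)⁻¹) atTop (𝓝 0) :=
        tendsto_one_div_add_atTop_nhds_zero_nat.congr (by intro n; rw [one_div])
      exact squeeze_zero (fun n => (hcpos n).le) (fun n => (hc n).2.le) hub
    · exact Filter.Eventually.of_forall fun n => (hcpos n).ne'
  have hslope : Tendsto (fun n => slope h 0 (c n)) atTop (𝓝 (AAf x)) :=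
    (hasDerivAt_iff_tendsto_slope.mp hd2).comp hctend
  refine le_of_tendsto' hslope fun n => ?_
  rw [slope_def_field, hh0, hAfx]
  apply div_nonpos_of_nonpos_of_nonneg
  · simpa using hhc n
  · simpa using (hcpos n).le
end

section
/- Let K be a compact metrizable space and (T_t)_{t∈ℝ} a strongly continuous group of positive isometries of C(K,ℝ). Suppose that for every f ∈ C(K,ℝ) the limit A f := lim_{t→0} (T_t f − f)/t exists in supremum norm (i.e. the generator has full domain C(K,ℝ)). Then A f = 0 for every f ∈ C(K,ℝ). -/
open MeasureTheory Filter Topology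

/-- Let `K` be compact metrizable and `(T_t)` a strongly continuous group of
positive isometries of `C(K,ℝ)` whose generator `A` has full domain `C(K,ℝ)`. Then `A = 0`. -/
theorem full_domain_generator_zero
    {K : Type*} [TopologicalSpace K] [CompactSpace K] [TopologicalSpace.MetrizableSpace K]
    (T : ℝ → C(K, ℝ) →ₗ[ℝ] C(K, ℝ))
    (hT0 : T 0 = LinearMap.id)
    (hTgrp : ∀ (s t : ℝ) (f : C(K, ℝ)), T (s + t) f = T s (T t f))
    (hTiso : ∀ (t : ℝ) (f : C(K, ℝ)), ‖T t f‖ = ‖f‖)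
    (hTpos : ∀ (t : ℝ) (f : C(K, ℝ)), 0 ≤ f → 0 ≤ T t f)
    (hTcont : ∀ f : C(K, ℝ), Continuous fun t : ℝ => T t f)
    (A : C(K, ℝ) → C(K, ℝ))
    (hA : ∀ f : C(K, ℝ), Tendsto (fun t : ℝ => t⁻¹ • (T t f - f)) (𝓝[≠] 0) (𝓝 (A f))) :
    ∀ f : C(K, ℝ), A f = 0 := by
  intro f
  ext x
  haveI : Nonempty K := ⟨x⟩
  -- T (-t) is inverse of T t
  have hinv : ∀ (t : ℝ) (g : C(K, ℝ)), T (-t) (T t g) = g := by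
    intro t g
    have h := hTgrp (-t) t g
    rw [neg_add_cancel, hT0] at h
    simpa using h.symm
  -- monotonicity
  have hmono : ∀ (t : ℝ) (g h : C(K, ℝ)), g ≤ h → T t g ≤ T t h := by
    intro t g h hgh
    have := hTpos t (h - g) (by simpa [sub_nonneg] using hgh)
    rw [map_sub] at this
    simpa [sub_nonneg] using this
  -- T t 1 ≤ 1
  have hle1 : ∀ t : ℝ, T t 1 ≤ 1 := by
    intro t
    rw [ContinuousMap.le_def]
    intro y
    have h1 : (T t 1) y ≤ |(T t 1) y| := le_abs_self _
    have h2 : |(T t 1) y| ≤ ‖T t 1‖ := by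
      simpa [Real.norm_eq_abs] using (T t 1).norm_coe_le_norm y
    have h3 : ‖T t (1 : C(K, ℝ))‖ = 1 := by rw [hTiso t 1, norm_one]
    simpa using (h1.trans h2).trans_eq h3
  -- T t 1 = 1
  have hone : ∀ t : ℝ, T t 1 = 1 := by
    intro t
    refine le_antisymm (hle1 t) ?_
    have h1 := hmono t _ _ (hle1 (-t))
    have h2 := hinv (-t) (1 : C(K, ℝ))
    rw [neg_neg] at h2
    rwa [h2] at h1
  -- lattice homomorphism
  have hle_abs : ∀ g : C(K, ℝ), g ≤ |g| := by
    intro g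
    rw [ContinuousMap.le_def]
    intro y
    simpa [ContinuousMap.abs_apply] using le_abs_self (g y)
  have hneg_abs : ∀ g : C(K, ℝ), -|g| ≤ g := by
    intro g
    rw [ContinuousMap.le_def]
    intro y
    simpa [ContinuousMap.abs_apply, ContinuousMap.neg_apply] using neg_abs_le (g y)
  have habs_nonneg : ∀ g : C(K, ℝ), 0 ≤ |g| := by
    intro g
    rw [ContinuousMap.le_def]
    intro y
    simpa [ContinuousMap.abs_apply] using abs_nonneg (g y)
  have habs_le : ∀ (t : ℝ) (g : C(K, ℝ)), |T t g| ≤ T t |g| := by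
    intro t g
    rw [ContinuousMap.le_def]
    intro y
    have h1 := ContinuousMap.le_def.mp (hmono t g |g| (hle_abs g)) y
    have h2 := ContinuousMap.le_def.mp (hmono t (-|g|) g (hneg_abs g)) y
    rw [map_neg] at h2
    simp only [ContinuousMap.abs_apply, ContinuousMap.neg_apply] at h1 h2 ⊢
    rw [abs_le]
    exact ⟨by linarith, h1⟩
  have habs : ∀ (t : ℝ) (g : C(K, ℝ)), T t |g| = |T t g| := by
    intro t g
    refine le_antisymm ?_ (habs_le t g)
    have h1 := habs_le (-t) (T t g)
    rw [hinv t g] at h1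
    have h2 := hmono t _ _ h1
    have h3 := hinv (-t) |T t g|
    rw [neg_neg] at h3
    rwa [h3] at h2
  set lam : ℝ := f x with hlam
  set F : C(K, ℝ) := |f - lam • 1| with hF
  have hF0 : F x = 0 := by
    simp [hF, hlam, ContinuousMap.abs_apply]
  have hkey : ∀ t : ℝ, (T t F) x = |(T t f) x - lam| := by
    intro t
    have h : T t F = |T t f - lam • 1| := by
      rw [hF, habs, map_sub, _root_.map_smul, hone]
    rw [h]
    simp [ContinuousMap.abs_apply]
  have heval : ∀ g : C(K, ℝ),
      Tendsto (fun t : ℝ => t⁻¹ * ((T t g) x - g x)) (𝓝[≠] 0) (𝓝 (A g x)) := by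
    intro g
    have := ((continuous_eval_const x).tendsto (A g)).comp (hA g)
    simpa [Function.comp_def] using this
  have hTF_nonneg : ∀ t : ℝ, 0 ≤ (T t F) x := by
    intro t
    have := hTpos t F (by rw [hF]; exact habs_nonneg _)
    simpa using ContinuousMap.le_def.mp this x
  have hsubp : 𝓝[>] (0:ℝ) ≤ 𝓝[≠] (0:ℝ) :=
    nhdsWithin_mono _ fun t ht => ne_of_gt ht
  have hsubn : 𝓝[<] (0:ℝ) ≤ 𝓝[≠] (0:ℝ) :=
    nhdsWithin_mono _ fun t ht => ne_of_lt ht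
  have hc0 : A F x = 0 := by
    have hpos : 0 ≤ A F x := by
      refine ge_of_tendsto ((heval F).mono_left hsubp) ?_
      filter_upwards [self_mem_nhdsWithin] with t ht
      have ht' : (0 : ℝ) < t := ht
      rw [hF0, sub_zero]
      exact mul_nonneg (by positivity) (hTF_nonneg t)
    have hneg : A F x ≤ 0 := by
      refine le_of_tendsto ((heval F).mono_left hsubn) ?_
      filter_upwards [self_mem_nhdsWithin] with t ht
      have ht' : t < 0 := ht
      rw [hF0, sub_zero]
      exact mul_nonpos_iff.mpr (Or.inr ⟨(inv_nonpos.mpr ht'.le), hTF_nonneg t⟩)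
    linarith
  have habs_tendsto : Tendsto (fun t : ℝ => |t⁻¹ * ((T t f) x - f x)|) (𝓝[>] 0)
      (𝓝 |A f x|) :=
    ((continuous_abs.tendsto _).comp (heval f)).mono_left hsubp
  have heq : Tendsto (fun t : ℝ => |t⁻¹ * ((T t f) x - f x)|) (𝓝[>] 0) (𝓝 0) := by
    have h1 : Tendsto (fun t : ℝ => t⁻¹ * ((T t F) x - F x)) (𝓝[>] 0) (𝓝 (A F x)) :=
      (heval F).mono_left hsubp
    rw [hc0] at h1
    refine h1.congr' ?_
    filter_upwards [self_mem_nhdsWithin] with t ht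
    have ht' : (0 : ℝ) < t := ht
    rw [hF0, sub_zero, hkey t, abs_mul, abs_inv, abs_of_pos ht']
  have hfin : |A f x| = 0 := tendsto_nhds_unique habs_tendsto heq
  simpa using abs_eq_zero.mp hfin
end

section
/- For n ≥ 1 define F_n : [0,1] → ℝ by F_n(z) := ((n−1)/n)(1−z)^n + 1/n. Then for all z ∈ [0,1]: (a) 0 ≤ F_n(z) ≤ 1; (b) F_n(z)·z·n ≤ 1; (c) F_n(z)·√(z n) ≤ 1. -/
lemma key_ineq (m : ℕ) (z : ℝ) (hz0 : 0 ≤ z) (hz1 : z ≤ 1) :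
    ((m : ℝ) + 1) * z * (1 - z) ^ m ≤ 1 := by
  have h1 : (0:ℝ) ≤ 1 - z := by linarith
  have h2 : 1 + (m:ℝ) * z ≤ (1 + z) ^ m := by
    have := one_add_mul_le_pow (a := z) (by linarith) m
    linarith
  have h3 : (1 - z) ^ m * (1 + z) ^ m ≤ 1 := by
    rw [← mul_pow]
    have h4 : (0:ℝ) ≤ (1 - z) * (1 + z) := by nlinarith
    have h5 : (1 - z) * (1 + z) ≤ 1 := by nlinarith
    exact pow_le_one₀ h4 h5
  nlinarith [pow_nonneg h1 m, mul_le_mul_of_nonneg_left h2 (pow_nonneg h1 m)]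

/-- For `n ≥ 1` and `F_n(z) = ((n−1)/n)(1−z)^n + 1/n` on `[0,1]`:
`0 ≤ F_n(z) ≤ 1`, `F_n(z)·z·n ≤ 1`, and `F_n(z)·√(zn) ≤ 1`. -/
theorem Fn_bounds (n : ℕ) (hn : 1 ≤ n) (z : ℝ) (hz0 : 0 ≤ z) (hz1 : z ≤ 1) :
    (0 ≤ ((n : ℝ) - 1) / n * (1 - z) ^ n + 1 / n ∧
      ((n : ℝ) - 1) / n * (1 - z) ^ n + 1 / n ≤ 1) ∧
    (((n : ℝ) - 1) / n * (1 - z) ^ n + 1 / n) * z * n ≤ 1 ∧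
    (((n : ℝ) - 1) / n * (1 - z) ^ n + 1 / n) * Real.sqrt (z * n) ≤ 1 := by
  have hn0 : (0:ℝ) < n := by exact_mod_cast hn
  have h1z : (0:ℝ) ≤ 1 - z := by linarith
  have hpn : (0:ℝ) ≤ (1 - z) ^ n := pow_nonneg h1z n
  have hp1 : (1 - z) ^ n ≤ 1 := pow_le_one₀ h1z (by linarith)
  have hn1 : (0:ℝ) ≤ (n:ℝ) - 1 := by
    have : (1:ℝ) ≤ n := by exact_mod_cast hn
    linarith
  have hF0 : 0 ≤ ((n : ℝ) - 1) / n * (1 - z) ^ n + 1 / n := by positivity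
  have hF1 : ((n : ℝ) - 1) / n * (1 - z) ^ n + 1 / n ≤ 1 := by
    rw [div_mul_eq_mul_div, ← add_div, div_le_one hn0]
    nlinarith
  -- part (b)
  have hb : (((n : ℝ) - 1) / n * (1 - z) ^ n + 1 / n) * z * n ≤ 1 := by
    obtain ⟨m, rfl⟩ : ∃ m, n = m + 1 := ⟨n - 1, (Nat.succ_pred_eq_of_pos hn).symm⟩
    have hkey := key_ineq m z hz0 hz1
    have hc : ((m + 1 : ℕ) : ℝ) = (m : ℝ) + 1 := by push_cast; ring
    have heq : ((((m+1:ℕ) : ℝ) - 1) / (m+1:ℕ) * (1 - z) ^ (m+1) + 1 / (m+1:ℕ)) * z * (m+1:ℕ)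
        = (m : ℝ) * z * ((1 - z) ^ m * (1 - z)) + z := by
      rw [hc]
      field_simp
      ring
    rw [heq]
    nlinarith [mul_le_mul_of_nonneg_right hkey h1z, pow_nonneg h1z m]
  refine ⟨⟨hF0, hF1⟩, hb, ?_⟩
  -- part (c)
  rcases le_or_gt (z * n) 1 with h | h
  · have hs : Real.sqrt (z * n) ≤ 1 := by
      rw [show (1:ℝ) = Real.sqrt 1 by simp]
      exact Real.sqrt_le_sqrt h
    calc (((n : ℝ) - 1) / n * (1 - z) ^ n + 1 / n) * Real.sqrt (z * n)
        ≤ 1 * 1 := mul_le_mul hF1 hs (Real.sqrt_nonneg _) (by linarith)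
      _ = 1 := by ring
  · have hs : Real.sqrt (z * n) ≤ z * n := by
      calc Real.sqrt (z * n) ≤ Real.sqrt ((z * n)^2) := Real.sqrt_le_sqrt (by nlinarith)
        _ = z * n := Real.sqrt_sq (by positivity)
    calc (((n : ℝ) - 1) / n * (1 - z) ^ n + 1 / n) * Real.sqrt (z * n)
        ≤ (((n : ℝ) - 1) / n * (1 - z) ^ n + 1 / n) * (z * n) :=
          mul_le_mul_of_nonneg_left hs hF0
      _ ≤ 1 := by nlinarith [hb]
end
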